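/- arXiv:2603.10414 — 10 statements merged into one kernel-verified Lean document; each statement's English description precedes it below -/
import Mathlib

section
/- For all natural numbers n > m, the difference w(n) − w(m) is not equal to a, not equal to b, and not equal to a + b. -/
/-!
Write `n = m + d` with `d > 0`, and let `u`, `v` be the increments of `⌊·/a⌋` and `⌊·/δ⌋` from
`m` to `n`, so that `w n - w m = d + a u + b v`. A floor increment is at least one as soon as the
step reaches the modulus, and `a u < d + a`. Since every forbidden value is at most
`a + b < 2b` and `δ < 2a`, this leaves `u ≤ 2`, `v ≤ 1`, and each of the remaining cases
violates one of these constraints.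
-/

def w (a b δ n : ℕ) : ℕ := n + a * (n / a) + b * (n / δ)

namespace Nat

theorem div_lt_div_of_add_le {a m n : ℕ} (ha : 0 < a) (h : m + a ≤ n) : m / a < n / a := by
  calc m / a < m / a + 1 := lt_add_one _
    _ = (m + a) / a := (add_div_right m ha).symm
    _ ≤ n / a := Nat.div_le_div_right h

theorem mul_div_sub_div_lt {a m n : ℕ} (ha : 0 < a) (h : m ≤ n) :
    a * (n / a - m / a) < n - m + a := by
  have hn : a * (n / a) ≤ n := mul_div_le n a
  have hm : m < a * (m / a + 1) := lt_mul_div_succ m ha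
  rw [Nat.mul_sub, Nat.mul_add] at *
  omega

end Nat

theorem w_sub_w {a b δ m n : ℕ} (h : m ≤ n) :
    w a b δ n - w a b δ m = (n - m) + a * (n / a - m / a) + b * (n / δ - m / δ) := by
  have ha : a * (m / a) ≤ a * (n / a) := Nat.mul_le_mul_left a (Nat.div_le_div_right h)
  have hδ : b * (m / δ) ≤ b * (n / δ) := Nat.mul_le_mul_left b (Nat.div_le_div_right h)
  simp only [w, Nat.mul_sub]
  omega

theorem add_mul_add_mul_ne {a δ d u v : ℕ} (hlt : a < δ) (hlt2 : δ < 2 * a) (hd : 0 < d)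
    (hu : a ≤ d → 0 < u) (hv : δ ≤ d → 0 < v) (hau : a * u < d + a) :
    d + a * u + (a + δ) * v ≠ a ∧
      d + a * u + (a + δ) * v ≠ a + δ ∧
      d + a * u + (a + δ) * v ≠ a + (a + δ) := by
  have small : d + a * u + (a + δ) * v ≤ a + (a + δ) → u ≤ 2 ∧ v ≤ 1 := fun h ↦ by
    constructor <;> nlinarith
  refine ⟨fun h ↦ ?_, fun h ↦ ?_, fun h ↦ ?_⟩ <;>
  · obtain ⟨hu2, hv1⟩ := small (by omega)
    interval_cases u <;> interval_cases v <;> omega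

theorem stmt_0_general (a δ : ℕ) (hlt : a < δ) (hlt2 : δ < 2 * a)
    (b : ℕ) (hb : b = a + δ) :
    ∀ m n : ℕ, m < n →
      w a b δ n - w a b δ m ≠ a ∧
      w a b δ n - w a b δ m ≠ b ∧
      w a b δ n - w a b δ m ≠ a + b := by
  intro m n hmn
  subst hb
  have ha : 0 < a := by omega
  rw [w_sub_w hmn.le]
  refine add_mul_add_mul_ne hlt hlt2 (Nat.sub_pos_of_lt hmn) (fun h ↦ ?_) (fun h ↦ ?_)
    (Nat.mul_div_sub_div_lt ha hmn.le)
  · exact Nat.sub_pos_of_lt (Nat.div_lt_div_of_add_le ha (by omega))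
  · exact Nat.sub_pos_of_lt (Nat.div_lt_div_of_add_le (ha.trans hlt) (by omega))

/-- Anti-collision: for all `n > m`, the difference `w n - w m` is not `a`, not `b`,
and not `a + b`. -/
theorem stmt_0 (a δ : ℕ) (ha : 0 < a) (hlt : a < δ) (hlt2 : δ < 2 * a)
    (hgcd : Nat.gcd a δ = 1) (b : ℕ) (hb : b = a + δ) :
    ∀ m n : ℕ, m < n →
      w a b δ n - w a b δ m ≠ a ∧
      w a b δ n - w a b δ m ≠ b ∧
      w a b δ n - w a b δ m ≠ a + b :=
  stmt_0_general a δ hlt hlt2 b hb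
end

section
/- For every n ≥ δ, writing r = n mod a: if r ≥ δ − a then w(n) − 2b = w(n − δ), and if r < δ − a then w(n) − 2b = w(n − δ) + a. -/
section

variable {a b δ m : ℕ}

theorem w_add_of_mod_add_lt (ha : 0 < a) (haδ : a ≤ δ) (h : m % a + (δ - a) < a) :
    w a b δ (m + δ) = w a b δ m + b + (δ + a) := by
  have hdiv_a : (m + δ) / a = m / a + 1 := by
    rw [show m + δ = m + (δ - a) + a by omega, Nat.add_div_right _ ha,
      Nat.add_div_eq_of_add_mod_lt (by rwa [Nat.mod_eq_of_lt (by omega : δ - a < a)]),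
      Nat.div_eq_of_lt (by omega : δ - a < a), Nat.add_zero]
  simp only [w, hdiv_a, Nat.add_div_right m (by omega : 0 < δ), Nat.mul_add, Nat.mul_one]
  ring

theorem w_add_of_le_mod_add (ha : 0 < a) (haδ : a ≤ δ) (hδ : δ < 2 * a)
    (h : a ≤ m % a + (δ - a)) :
    w a b δ (m + δ) = w a b δ m + b + (δ + a) + a := by
  have hdiv_a : (m + δ) / a = m / a + 2 := by
    rw [show m + δ = m + (δ - a) + a by omega, Nat.add_div_right _ ha,
      Nat.add_div_eq_of_le_mod_add_mod (by rwa [Nat.mod_eq_of_lt (by omega : δ - a < a)]) ha,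
      Nat.div_eq_of_lt (by omega : δ - a < a), Nat.add_zero]
  simp only [w, hdiv_a, Nat.add_div_right m (by omega : 0 < δ), Nat.mul_add, Nat.mul_one]
  ring

theorem sub_le_add_mod_iff (haδ : a ≤ δ) (hδ : δ < 2 * a) :
    δ - a ≤ (m + δ) % a ↔ m % a + (δ - a) < a := by
  have he : (δ - a) % a = δ - a := Nat.mod_eq_of_lt (by omega)
  have hmod : (m + δ) % a = (m + (δ - a)) % a := by
    rw [show m + δ = m + (δ - a) + a by omega, Nat.add_mod_right]
  rw [hmod]
  by_cases h : m % a + (δ - a) < a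
  · have := Nat.add_mod_of_add_mod_lt (a := m) (by rwa [he])
    omega
  · have := Nat.add_mod_add_of_le_add_mod (a := m) (by rw [he]; omega)
    have := Nat.mod_lt m (by omega : 0 < a)
    omega

end

theorem stmt_1_general (a δ : ℕ) (ha : 0 < a) (hlt : a < δ) (hlt2 : δ < 2 * a)
    (b : ℕ) (hb : b = a + δ) :
    ∀ n : ℕ, δ ≤ n →
      (δ - a ≤ n % a → w a b δ n - 2 * b = w a b δ (n - δ)) ∧
      (n % a < δ - a → w a b δ n - 2 * b = w a b δ (n - δ) + a) := by
  intro n hn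
  obtain ⟨m, rfl⟩ := Nat.exists_eq_add_of_le' hn
  have hmod := sub_le_add_mod_iff (m := m) hlt.le hlt2
  rw [Nat.add_sub_cancel]
  by_cases hcarry : m % a + (δ - a) < a
  · rw [w_add_of_mod_add_lt ha hlt.le hcarry]
    exact ⟨fun _ => by omega, fun h => absurd (hmod.2 hcarry) (Nat.not_le.2 h)⟩
  · rw [w_add_of_le_mod_add ha hlt.le hlt2 (Nat.le_of_not_lt hcarry)]
    exact ⟨fun h => absurd (hmod.1 h) hcarry, fun _ => by omega⟩

/-- For every `n ≥ δ`, writing `r = n % a`: if `r ≥ δ - a` then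
`w n - 2b = w (n - δ)`, and if `r < δ - a` then `w n - 2b = w (n - δ) + a`. -/
theorem stmt_1 (a δ : ℕ) (ha : 0 < a) (hlt : a < δ) (hlt2 : δ < 2 * a)
    (hgcd : Nat.gcd a δ = 1) (b : ℕ) (hb : b = a + δ) :
    ∀ n : ℕ, δ ≤ n →
      (δ - a ≤ n % a → w a b δ n - 2 * b = w a b δ (n - δ)) ∧
      (n % a < δ - a → w a b δ n - 2 * b = w a b δ (n - δ) + a) :=
  stmt_1_general a δ ha hlt hlt2 b hb
end

section
/- If a ≤ n < δ, then w(n) − δ belongs to W0; more precisely, w(n) − δ = w(n − (δ − a)). -/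
section

variable {a b δ n : ℕ}

theorem w_eq_self_of_lt (hna : n < a) (hnδ : n < δ) : w a b δ n = n := by
  simp [w, Nat.div_eq_of_lt hna, Nat.div_eq_of_lt hnδ]

theorem w_eq_add_of_le_of_lt (han : a ≤ n) (hna : n < 2 * a) (hnδ : n < δ) :
    w a b δ n = n + a := by
  have hdiv : n / a = 1 := Nat.div_eq_of_lt_le (by omega) (by omega)
  simp [w, hdiv, Nat.div_eq_of_lt hnδ]

end

theorem stmt_3_general (a δ : ℕ) (hlt2 : δ < 2 * a) (b : ℕ) :
    ∀ n : ℕ, a ≤ n → n < δ →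
      w a b δ n - δ ∈ Set.range (w a b δ) ∧
      w a b δ n - δ = w a b δ (n - (δ - a)) := by
  intro n han hnδ
  have key : w a b δ n - δ = w a b δ (n - (δ - a)) := by
    rw [w_eq_add_of_le_of_lt han (by omega) hnδ, w_eq_self_of_lt (by omega) (by omega)]
    omega
  exact ⟨⟨_, key.symm⟩, key⟩

/-- If `a ≤ n < δ`, then `w n - δ ∈ W0`; more precisely `w n - δ = w (n - (δ - a))`. -/
theorem stmt_3 (a δ : ℕ) (ha : 0 < a) (hlt : a < δ) (hlt2 : δ < 2 * a)
    (hgcd : Nat.gcd a δ = 1) (b : ℕ) (hb : b = a + δ) :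
    ∀ n : ℕ, a ≤ n → n < δ →
      w a b δ n - δ ∈ Set.range (w a b δ) ∧
      w a b δ n - δ = w a b δ (n - (δ - a)) :=
  stmt_3_general a δ hlt2 b
end

section
/- Suppose n ≥ a is written as n = q·a + r with 0 ≤ r < a, and suppose r < δ − a and w(n) − δ ∉ W0. Then (w(n) − δ) − b ∈ W0; more precisely, w(n) − w(n − (δ − a)) = 2b − a. -/
/-- `W0` is the image of `w`. -/
def W0 (a b δ : ℕ) : Set ℕ := Set.range (w a b δ)

/-!
With `d = δ - a`, passing from `n` to `n - d` lowers `⌊n/a⌋` by one (as `n % a < d < a`), so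
`w n - w (n - d) = d + a + b·(⌊n/δ⌋ - ⌊(n - d)/δ⌋) = δ + b·(⌊n/δ⌋ - ⌊(n - d)/δ⌋)`.
If `⌊n/δ⌋` did not drop, `w n - δ = w (n - d)` would lie in `W0`; so it drops by one and
the difference is `δ + b = 2b - a`.
-/

namespace Nat

theorem sub_div_eq_of_le_mod {m d k : ℕ} (h : d ≤ m % k) : (m - d) / k = m / k := by
  rcases k.eq_zero_or_pos with rfl | hk
  · simp
  have hm : m - d = k * (m / k) + (m % k - d) := by
    have := Nat.div_add_mod m k
    omega
  have hlt : m % k - d < k := by have := Nat.mod_lt m hk; omega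
  rw [hm, Nat.mul_add_div hk, Nat.div_eq_of_lt hlt, add_zero]

theorem sub_div_add_one_of_mod_lt {m d k : ℕ} (hmod : m % k < d) (hdk : d ≤ k) (hdm : d ≤ m) :
    (m - d) / k + 1 = m / k := by
  have hk : 0 < k := by omega
  have hkd : (k - d) % k = k - d := Nat.mod_eq_of_lt (by omega)
  rw [← Nat.add_div_right _ hk, show m - d + k = m + (k - d) by omega,
    Nat.add_div_eq_of_add_mod_lt (by rw [hkd]; omega), Nat.div_eq_of_lt (a := k - d) (by omega),
    add_zero]

end Nat

theorem w_eq_w_sub_add {a b δ m d i j : ℕ} (hd : d ≤ m) (hA : (m - d) / a + i = m / a)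
    (hB : (m - d) / δ + j = m / δ) :
    w a b δ m = w a b δ (m - d) + d + a * i + b * j := by
  unfold w
  rw [← hA, ← hB, Nat.mul_add, Nat.mul_add]
  omega

theorem stmt_6_general (a δ : ℕ) (hlt : a < δ) (hlt2 : δ < 2 * a)
    (b : ℕ) (hb : b = a + δ) :
    ∀ n : ℕ, a ≤ n → n % a < δ - a → w a b δ n - δ ∉ W0 a b δ →
      (w a b δ n - δ) - b ∈ W0 a b δ ∧
      w a b δ n - w a b δ (n - (δ - a)) = 2 * b - a := by
  intro n hn hr hnot
  have hdn : δ - a ≤ n := by omega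
  have hA := Nat.sub_div_add_one_of_mod_lt hr (by omega) hdn
  by_cases hc : δ - a ≤ n % δ
  · have hw := w_eq_w_sub_add (b := b) (j := 0) hdn hA (Nat.sub_div_eq_of_le_mod hc)
    exact absurd ⟨n - (δ - a), by omega⟩ hnot
  · have hB := Nat.sub_div_add_one_of_mod_lt (Nat.lt_of_not_le hc) (by omega) hdn
    have hw := w_eq_w_sub_add (b := b) hdn hA hB
    exact ⟨⟨n - (δ - a), by omega⟩, by omega⟩

/-- Suppose `n ≥ a`, with remainder `r = n % a` satisfying `r < δ - a`, and
`w n - δ ∉ W0`. Then `(w n - δ) - b ∈ W0`; more precisely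
`w n - w (n - (δ - a)) = 2b - a`. -/
theorem stmt_6 (a δ : ℕ) (ha : 0 < a) (hlt : a < δ) (hlt2 : δ < 2 * a)
    (hgcd : Nat.gcd a δ = 1) (b : ℕ) (hb : b = a + δ) :
    ∀ n : ℕ, a ≤ n → n % a < δ - a → w a b δ n - δ ∉ W0 a b δ →
      (w a b δ n - δ) - b ∈ W0 a b δ ∧
      w a b δ n - w a b δ (n - (δ - a)) = 2 * b - a :=
  stmt_6_general a δ hlt hlt2 b hb
end

section
/- The number of indices n with 0 ≤ n < a·δ such that w(n+1) − w(n) = a + 1 equals δ − 1. -/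
/-!
The gap `w (n + 1) - w n` is `1`, plus `a` when `a ∣ n + 1`, plus `b` when `δ ∣ n + 1`. Since
`0 < a < b`, it equals `a + 1` exactly when `a ∣ n + 1` and `δ ∤ n + 1`. Among `1, …, aδ` there
are `δ` multiples of `a`, and by coprimality the only one divisible by `δ` is `aδ` itself.
-/

open Finset

theorem w_succ (a b δ n : ℕ) :
    w a b δ (n + 1) =
      w a b δ n + 1 + (if a ∣ n + 1 then a else 0) + (if δ ∣ n + 1 then b else 0) := by
  simp only [w, Nat.succ_div]
  split_ifs <;> ring

theorem w_succ_sub_w_eq_iff {a b δ : ℕ} (ha : 0 < a) (hab : a < b) (n : ℕ) :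
    w a b δ (n + 1) - w a b δ n = a + 1 ↔ a ∣ n + 1 ∧ ¬δ ∣ n + 1 := by
  rw [w_succ]
  split_ifs <;> simp_all <;> omega

theorem Nat.Coprime.card_filter_dvd_succ_and_not_dvd_succ {a δ : ℕ} (h : Nat.Coprime a δ) :
    #{n ∈ range (a * δ) | a ∣ n + 1 ∧ ¬δ ∣ n + 1} = δ - 1 := by
  have hsplit := card_filter_add_card_filter_not (s := {n ∈ range (a * δ) | a ∣ n + 1})
    (fun n => δ ∣ n + 1)
  have hboth : ∀ m, a ∣ m ∧ δ ∣ m ↔ a * δ ∣ m := fun m =>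
    ⟨fun ⟨ha, hδ⟩ => h.mul_dvd_of_dvd_of_dvd ha hδ,
      fun had => ⟨dvd_of_mul_right_dvd had, dvd_of_mul_left_dvd had⟩⟩
  simp only [filter_filter, hboth, Nat.card_multiples] at hsplit
  rcases Nat.eq_zero_or_pos a with rfl | ha
  · simp [(Nat.coprime_zero_left δ).mp h]
  rcases Nat.eq_zero_or_pos δ with rfl | hδ
  · simp
  rw [Nat.div_self (by positivity), Nat.mul_div_cancel_left _ ha] at hsplit
  omega

theorem stmt_9_general (a δ : ℕ) (ha : 0 < a) (hlt : a < δ)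
    (hgcd : Nat.gcd a δ = 1) (b : ℕ) (hb : b = a + δ) :
    ((Finset.range (a * δ)).filter
      (fun n => w a b δ (n + 1) - w a b δ n = a + 1)).card = δ - 1 := by
  rw [filter_congr fun n _ => w_succ_sub_w_eq_iff ha (by omega : a < b) n]
  exact Nat.Coprime.card_filter_dvd_succ_and_not_dvd_succ hgcd

/-- In one index-period of length `aδ`, exactly `δ - 1` gaps equal `a + 1`. -/
theorem stmt_9 (a δ : ℕ) (ha : 0 < a) (hlt : a < δ) (hlt2 : δ < 2 * a)
    (hgcd : Nat.gcd a δ = 1) (b : ℕ) (hb : b = a + δ) :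
    ((Finset.range (a * δ)).filter
      (fun n => w a b δ (n + 1) - w a b δ n = a + 1)).card = δ - 1 :=
  stmt_9_general a δ ha hlt hgcd b hb
end

section
/- Let n ∈ ℕ be such that a divides n+1 but δ does not divide n+1, and let ρ = (n+1) mod δ (so 1 ≤ ρ ≤ δ−1). Then the number of indices m ≤ n for which there exists k > n with w(k) = w(m) + δ equals min(ρ, min(δ − a, δ − ρ)). -/
theorem w_eq_w_add_iff {a δ m k : ℕ} (hδ : δ < 2 * a) (hmk : m < k) :
    w a (a + δ) δ k = w a (a + δ) δ m + δ ↔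
      k = m + (δ - a) ∧ k / a = m / a + 1 ∧ k / δ = m / δ := by
  unfold w
  constructor
  · intro h
    have hdivA : m / a ≤ k / a := Nat.div_le_div_right hmk.le
    have hdivD : m / δ ≤ k / δ := Nat.div_le_div_right hmk.le
    have hmulA : a * (m / a) ≤ a * (k / a) := Nat.mul_le_mul_left a hdivA
    have hblock : k / δ = m / δ := by
      by_contra hne
      have : (a + δ) * (m / δ + 1) ≤ (a + δ) * (k / δ) := Nat.mul_le_mul_left _ (by omega)
      rw [mul_add_one] at this
      omega
    rw [hblock] at h
    have hcross : k / a = m / a + 1 := by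
      rcases Nat.lt_or_ge (k / a) (m / a + 1) with hsame | hge
      · have hk : k = m + δ := by
          rw [show k / a = m / a by omega] at h
          omega
        have : k / δ = m / δ + 1 := by rw [hk, Nat.add_div_right m (by omega)]
        omega
      · by_contra hne
        have : a * (m / a + 2) ≤ a * (k / a) := Nat.mul_le_mul_left a (by omega)
        rw [mul_add] at this
        omega
    rw [hcross, mul_add_one] at h
    exact ⟨by omega, hcross, hblock⟩
  · rintro ⟨rfl, hcross, hblock⟩
    rw [hcross, hblock, mul_add_one]
    omega

theorem add_div_eq_div_add_one_of_dvd {a c m d : ℕ} (hc : a ∣ c) (hmc : m < c) (hcd : c ≤ m + d)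
    (hd : d < a) : (m + d) / a = m / a + 1 := by
  have ha : 0 < a := by omega
  obtain ⟨t, rfl⟩ := hc
  rcases t with _ | s
  · simp at hmc
  rw [mul_add_one, mul_comm] at hmc hcd
  rw [(Nat.div_eq_iff ha).2 (show s * a ≤ m ∧ m ≤ s * a + a - 1 by omega),
    (Nat.div_eq_iff ha).2 (show (s + 1) * a ≤ m + d ∧ m + d ≤ (s + 1) * a + a - 1 by
      rw [add_one_mul]; omega)]

theorem ncard_setOf_lt_le_add_div_eq {δ : ℕ} (hδ : 0 < δ) (c d : ℕ) :
    {m : ℕ | m < c ∧ c ≤ m + d ∧ (m + d) / δ = m / δ}.ncard =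
      min (min (c % δ) d) (min (δ - c % δ) (δ - d)) := by
  have hc := Nat.div_add_mod' c δ
  have hρ := Nat.mod_lt c hδ
  have hset : {m : ℕ | m < c ∧ c ≤ m + d ∧ (m + d) / δ = m / δ} =
      ↑(Finset.Ico (max (c - d) (c / δ * δ)) (min c (c / δ * δ + δ - d))) := by
    ext m
    simp only [Set.mem_ofPred_eq, Finset.coe_Ico, Set.mem_Ico]
    constructor
    · rintro ⟨hmc, hcd, hblock⟩
      have hle : m / δ ≤ c / δ := Nat.div_le_div_right hmc.le
      have hge : c / δ ≤ (m + d) / δ := Nat.div_le_div_right hcd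
      have hm := (Nat.div_eq_iff hδ).1 (show m / δ = c / δ by omega)
      have hmd := (Nat.div_eq_iff hδ).1 (show (m + d) / δ = c / δ by omega)
      omega
    · rintro ⟨hlo, hhi⟩
      refine ⟨by omega, by omega, ?_⟩
      rw [(Nat.div_eq_iff hδ).2 (show c / δ * δ ≤ m + d ∧ _ by omega),
        (Nat.div_eq_iff hδ).2 (show c / δ * δ ≤ m ∧ _ by omega)]
  rw [hset, Set.ncard_coe_finset, Nat.card_Ico]
  omega

theorem stmt_10_general (a δ : ℕ) (hlt : a < δ) (hlt2 : δ < 2 * a)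
    (b : ℕ) (hb : b = a + δ) :
    ∀ n : ℕ, a ∣ (n + 1) → ¬ δ ∣ (n + 1) →
      {m : ℕ | m ≤ n ∧ ∃ k, n < k ∧ w a b δ k = w a b δ m + δ}.ncard =
        min ((n + 1) % δ) (min (δ - a) (δ - (n + 1) % δ)) := by
  intro n hdvd _
  subst hb
  have hset : {m : ℕ | m ≤ n ∧ ∃ k, n < k ∧ w a (a + δ) δ k = w a (a + δ) δ m + δ} =
      {m : ℕ | m < n + 1 ∧ n + 1 ≤ m + (δ - a) ∧ (m + (δ - a)) / δ = m / δ} := by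
    ext m
    simp only [Set.mem_ofPred_eq]
    constructor
    · rintro ⟨hmn, k, hnk, hw⟩
      obtain ⟨rfl, -, hblock⟩ := (w_eq_w_add_iff hlt2 (by omega)).1 hw
      exact ⟨by omega, hnk, hblock⟩
    · rintro ⟨hmn, hnk, hblock⟩
      refine ⟨by omega, m + (δ - a), by omega, (w_eq_w_add_iff hlt2 (by omega)).2 ⟨rfl, ?_, hblock⟩⟩
      exact add_div_eq_div_add_one_of_dvd hdvd hmn hnk (by omega)
  rw [hset, ncard_setOf_lt_le_add_div_eq (by omega)]
  -- the term `δ - (δ - a) = a` of the minimum exceeds `δ - a`, so it drops out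
  omega

/-- Collision count at an `(a+1)`-gap: if `a ∣ n+1` but `δ ∤ n+1`, and
`ρ = (n+1) % δ`, then the number of indices `m ≤ n` having a `δ`-collision
partner `k > n` equals `min ρ (min (δ - a) (δ - ρ))`. -/
theorem stmt_10 (a δ : ℕ) (ha : 0 < a) (hlt : a < δ) (hlt2 : δ < 2 * a)
    (hgcd : Nat.gcd a δ = 1) (b : ℕ) (hb : b = a + δ) :
    ∀ n : ℕ, a ∣ (n + 1) → ¬ δ ∣ (n + 1) →
      {m : ℕ | m ≤ n ∧ ∃ k, n < k ∧ w a b δ k = w a b δ m + δ}.ncard =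
        min ((n + 1) % δ) (min (δ - a) (δ - (n + 1) % δ)) :=
  stmt_10_general a δ hlt hlt2 b hb
end

section
/- The number of indices n with 0 ≤ n < a·δ such that there exists m < n with w(n) = w(m) + δ equals a·(δ − a). -/
lemma w_key (a δ : ℕ) (ha : 0 < a) (hlt : a < δ) (hlt2 : δ < 2 * a)
    (b : ℕ) (hb : b = a + δ) (n : ℕ) :
    (∃ m < n, w a b δ n = w a b δ m + δ) ↔ (n % a < δ - a ∧ δ - a ≤ n % δ) := by
  subst hb
  have hδ : 0 < δ := lt_trans ha hlt
  constructor
  · rintro ⟨m, hm, hw⟩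
    unfold w at hw
    obtain ⟨d1, hd1⟩ := Nat.exists_eq_add_of_le (Nat.div_le_div_right (c := a) hm.le)
    obtain ⟨d2, hd2⟩ := Nat.exists_eq_add_of_le (Nat.div_le_div_right (c := δ) hm.le)
    have e1 : a * (n / a) = a * (m / a) + a * d1 := by rw [hd1, Nat.mul_add]
    have e2 : (a + δ) * (n / δ) = (a + δ) * (m / δ) + (a + δ) * d2 := by
      rw [hd2, Nat.mul_add]
    -- d2 = 0
    have hd2z : d2 = 0 := by
      rcases Nat.eq_zero_or_pos d2 with h | h
      · exact h
      · exfalso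
        have hge : a + δ ≤ (a + δ) * d2 := Nat.le_mul_of_pos_right _ h
        omega
    have ez2 : (a + δ) * d2 = 0 := by rw [hd2z, Nat.mul_zero]
    -- d1 ≤ 1
    have hd1le : d1 ≤ 1 := by
      by_contra h
      have : a * 2 ≤ a * d1 := Nat.mul_le_mul_left a (by omega)
      omega
    -- d1 ≠ 0
    have hd1ne : d1 ≠ 0 := by
      intro h0
      have ez1 : a * d1 = 0 := by rw [h0, Nat.mul_zero]
      have hnm : n = m + δ := by omega
      have h3 : (m + a) / a = m / a + 1 := Nat.add_div_right m ha
      have h4 : (m + a) / a ≤ n / a := Nat.div_le_div_right (by omega)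
      omega
    have hd1one : d1 = 1 := by
      rcases Nat.eq_zero_or_pos d1 with h | h
      · exact absurd h hd1ne
      · omega
    have eo1 : a * d1 = a := by rw [hd1one, Nat.mul_one]
    have hk : n = m + (δ - a) := by omega
    have hna : n % a + a * (n / a) = n := Nat.mod_add_div n a
    have hma : m % a + a * (m / a) = m := Nat.mod_add_div m a
    have hnd : n % δ + δ * (n / δ) = n := Nat.mod_add_div n δ
    have hmd : m % δ + δ * (m / δ) = m := Nat.mod_add_div m δ
    have ea : a * (n / a) = a * (m / a) + a := by omega
    have ed : δ * (n / δ) = δ * (m / δ) := by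
      rw [hd2, hd2z, Nat.add_zero]
    have hmamod : m % a < a := Nat.mod_lt m ha
    omega
  · rintro ⟨h1, h2⟩
    have hea : δ - a < a := by omega
    have hen : δ - a ≤ n := le_trans h2 (Nat.mod_le n δ)
    refine ⟨n - (δ - a), by omega, ?_⟩
    have hna : n % a + a * (n / a) = n := Nat.mod_add_div n a
    have hnd : n % δ + δ * (n / δ) = n := Nat.mod_add_div n δ
    have han : a ≤ n := by
      by_contra h
      have h3 : n % a = n := Nat.mod_eq_of_lt (by omega)
      have h4 : n % δ = n := Nat.mod_eq_of_lt (by omega)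
      omega
    have hppos : 0 < n / a := Nat.div_pos han ha
    have hap : a * (n / a) = a * (n / a - 1) + a := by
      have h5 : a * (n / a - 1 + 1) = a * (n / a - 1) + a := by
        rw [Nat.mul_add, Nat.mul_one]
      rw [← h5]
      congr 1
      omega
    have hndlt : n % δ < δ := Nat.mod_lt n hδ
    have hmδ : (n - (δ - a)) / δ = n / δ := by
      have h6 : n - (δ - a) = δ * (n / δ) + (n % δ - (δ - a)) := by omega
      rw [h6, Nat.mul_add_div hδ]
      have h7 : (n % δ - (δ - a)) / δ = 0 := Nat.div_eq_of_lt (by omega)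
      omega
    have hmα : (n - (δ - a)) / a = n / a - 1 := by
      have h8 : n - (δ - a) = a * (n / a - 1) + (a + n % a - (δ - a)) := by omega
      rw [h8, Nat.mul_add_div ha]
      have h9 : (a + n % a - (δ - a)) / a = 0 := Nat.div_eq_of_lt (by omega)
      omega
    unfold w
    rw [hmδ, hmα]
    omega

/-- δ-collision counting: in one index-period of length `aδ`, the number of
indices `n` such that `w n = w m + δ` for some `m < n` equals `a·(δ - a)`. -/
theorem stmt_12 (a δ : ℕ) (ha : 0 < a) (hlt : a < δ) (hlt2 : δ < 2 * a)
    (hgcd : Nat.gcd a δ = 1) (b : ℕ) (hb : b = a + δ) :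
    {n : ℕ | n < a * δ ∧ ∃ m < n, w a b δ n = w a b δ m + δ}.ncard =
      a * (δ - a) := by
  classical
  have hδ : 0 < δ := lt_trans ha hlt
  have hco : Nat.Coprime a δ := hgcd
  have hset : {n : ℕ | n < a * δ ∧ ∃ m < n, w a b δ n = w a b δ m + δ} =
      ↑((Finset.range (a * δ)).filter fun n => n % a < δ - a ∧ δ - a ≤ n % δ) := by
    ext n
    simp only [Set.mem_setOf_eq, Finset.coe_filter, Finset.mem_range, Set.mem_setOf_eq]
    rw [w_key a δ ha hlt hlt2 b hb n]
  rw [hset, Set.ncard_coe_finset]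
  have hcard : ((Finset.range (a * δ)).filter fun n => n % a < δ - a ∧ δ - a ≤ n % δ).card =
      ((Finset.range (δ - a)) ×ˢ (Finset.Ico (δ - a) δ)).card := by
    apply Finset.card_nbij' (fun n => (n % a, n % δ))
      (fun p => (Nat.chineseRemainder hco p.1 p.2 : ℕ))
    · intro n hn
      simp only [Finset.mem_coe, Finset.mem_filter, Finset.mem_range] at hn
      simp only [Finset.mem_coe, Finset.mem_product, Finset.mem_range, Finset.mem_Ico]
      exact ⟨hn.2.1, hn.2.2, Nat.mod_lt n hδ⟩
    · intro p hp
      simp only [Finset.mem_coe, Finset.mem_product, Finset.mem_range, Finset.mem_Ico] at hp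
      simp only [Finset.mem_coe, Finset.mem_filter, Finset.mem_range]
      have hlt' := Nat.chineseRemainder_lt_mul hco p.1 p.2 (by omega) (by omega)
      have hprop := (Nat.chineseRemainder hco p.1 p.2).2
      have h1 : (Nat.chineseRemainder hco p.1 p.2 : ℕ) % a = p.1 := by
        have hh := hprop.1
        unfold Nat.ModEq at hh
        rw [hh, Nat.mod_eq_of_lt (by omega)]
      have h2 : (Nat.chineseRemainder hco p.1 p.2 : ℕ) % δ = p.2 := by
        have hh := hprop.2
        unfold Nat.ModEq at hh
        rw [hh, Nat.mod_eq_of_lt hp.2.2]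
      exact ⟨hlt', by rw [h1]; omega, by rw [h2]; exact hp.2.1⟩
    · intro n hn
      simp only [Finset.mem_coe, Finset.mem_filter, Finset.mem_range] at hn
      have hprop := (Nat.chineseRemainder hco (n % a) (n % δ)).2
      have hlt' := Nat.chineseRemainder_lt_mul hco (n % a) (n % δ) (by omega) (by omega)
      have hmod : (Nat.chineseRemainder hco (n % a) (n % δ) : ℕ) ≡ n [MOD a * δ] := by
        rw [← Nat.modEq_and_modEq_iff_modEq_mul hco]
        exact ⟨hprop.1.trans (Nat.mod_modEq n a), hprop.2.trans (Nat.mod_modEq n δ)⟩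
      unfold Nat.ModEq at hmod
      rw [Nat.mod_eq_of_lt hlt', Nat.mod_eq_of_lt hn.1] at hmod
      exact hmod
    · intro p hp
      simp only [Finset.mem_coe, Finset.mem_product, Finset.mem_range, Finset.mem_Ico] at hp
      have hprop := (Nat.chineseRemainder hco p.1 p.2).2
      have h1 : (Nat.chineseRemainder hco p.1 p.2 : ℕ) % a = p.1 := by
        have hh := hprop.1
        unfold Nat.ModEq at hh
        rw [hh, Nat.mod_eq_of_lt (by omega)]
      have h2 : (Nat.chineseRemainder hco p.1 p.2 : ℕ) % δ = p.2 := by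
        have hh := hprop.2
        unfold Nat.ModEq at hh
        rw [hh, Nat.mod_eq_of_lt hp.2.2]
      show ((Nat.chineseRemainder hco p.1 p.2 : ℕ) % a, (Nat.chineseRemainder hco p.1 p.2 : ℕ) % δ) = p
      rw [h1, h2]
  rw [hcard, Finset.card_product, Finset.card_range, Nat.card_Ico]
  have h1 : δ - (δ - a) = a := by omega
  rw [h1, Nat.mul_comm]
end

section
/- The number of natural numbers x with x < (3δ + a)·a such that x ∈ W3 equals a². -/
/-- `W3 = {x : x + δ ∈ W0 and x ∉ W0}`. -/
def W3 (a b δ : ℕ) : Set ℕ := {x | x + δ ∈ W0 a b δ ∧ x ∉ W0 a b δ}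


lemma w_mono (a δ : ℕ) : StrictMono (w a (a+δ) δ) := by
  apply strictMono_nat_of_lt_succ
  intro n
  have h1 : a * (n/a) ≤ a * ((n+1)/a) :=
    Nat.mul_le_mul_left _ (Nat.div_le_div_right (Nat.le_succ n))
  have h2 : (a+δ) * (n/δ) ≤ (a+δ) * ((n+1)/δ) :=
    Nat.mul_le_mul_left _ (Nat.div_le_div_right (Nat.le_succ n))
  simp only [w]; omega

lemma w_ge (a δ n : ℕ) : n ≤ w a (a+δ) δ n := by
  simp only [w]; omega

lemma w_period (a δ : ℕ) (ha : 0 < a) (hδ : 0 < δ) (n : ℕ) :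
    w a (a+δ) δ (n + a*δ) = w a (a+δ) δ n + (3*δ+a)*a := by
  have h1 : (n + a*δ)/a = n/a + δ := Nat.add_mul_div_left _ _ ha
  have h2 : (n + a*δ)/δ = n/δ + a := by
    rw [mul_comm]; exact Nat.add_mul_div_left _ _ hδ
  simp only [w, h1, h2]; ring

/-- forward: if `w k + δ = w m` then `m % a < δ - a` and `δ - a ≤ m % δ`. -/
lemma char_fwd (a δ : ℕ) (ha : 0 < a) (hlt : a < δ) (hlt2 : δ < 2*a) (m k : ℕ)
    (hk : w a (a+δ) δ k + δ = w a (a+δ) δ m) :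
    m % a < δ - a ∧ δ - a ≤ m % δ := by
  have hkm : k < m := by
    have := (w_mono a δ).lt_iff_lt (a := k) (b := m)
    omega
  have hd2 : k/a ≤ m/a := Nat.div_le_div_right hkm.le
  have hd1 : k/δ ≤ m/δ := Nat.div_le_div_right hkm.le
  obtain ⟨s, hs⟩ := Nat.exists_eq_add_of_le hd2
  obtain ⟨u, hu⟩ := Nat.exists_eq_add_of_le hd1
  have ema : a * (m/a) + m % a = m := Nat.div_add_mod m a
  have emd : δ * (m/δ) + m % δ = m := Nat.div_add_mod m δ
  have eka : a * (k/a) + k % a = k := Nat.div_add_mod k a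
  have ekd : δ * (k/δ) + k % δ = k := Nat.div_add_mod k δ
  have hma : m % a < a := Nat.mod_lt _ ha
  have hka : k % a < a := Nat.mod_lt _ ha
  have hmd : m % δ < δ := Nat.mod_lt _ (by omega)
  have hkd : k % δ < δ := Nat.mod_lt _ (by omega)
  simp only [w] at hk
  rw [hs] at hk ema
  rw [hu] at hk emd
  rw [Nat.mul_add] at ema
  rw [Nat.mul_add] at emd
  rw [Nat.mul_add, Nat.mul_add] at hk
  -- now: u = 0
  have hu0 : u = 0 := by
    by_contra h
    have h1 : (a+δ) ≤ (a+δ) * u := Nat.le_mul_of_pos_right _ (by omega)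
    have h2 : δ ≤ δ * u := Nat.le_mul_of_pos_right _ (by omega)
    omega
  subst hu0
  have hs1 : s = 1 := by
    rcases Nat.lt_or_ge s 2 with h | h
    · interval_cases s
      · -- s = 0 : then m - k = δ but m - k = m%a - k%a < a, contradiction
        omega
      · rfl
    · have : a * 2 ≤ a * s := Nat.mul_le_mul_left _ h
      omega
  subst hs1
  omega

/-- backward: if `m % a < δ - a` and `δ - a ≤ m % δ`, then `w (m - (δ-a)) + δ = w m`. -/
lemma char_bwd (a δ : ℕ) (ha : 0 < a) (hlt : a < δ) (hlt2 : δ < 2*a) (m : ℕ)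
    (hA : m % a < δ - a) (hB : δ - a ≤ m % δ) :
    w a (a+δ) δ (m - (δ - a)) + δ = w a (a+δ) δ m := by
  set d := δ - a with hd
  have hdm : d ≤ m := le_trans hB (Nat.mod_le _ _)
  set k := m - d with hkdef
  have hmk : m = k + d := by omega
  have ema : a * (m/a) + m % a = m := Nat.div_add_mod m a
  have emd : δ * (m/δ) + m % δ = m := Nat.div_add_mod m δ
  have eka : a * (k/a) + k % a = k := Nat.div_add_mod k a
  have ekd : δ * (k/δ) + k % δ = k := Nat.div_add_mod k δ
  have hka : k % a < a := Nat.mod_lt _ ha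
  have hkd : k % δ < δ := Nat.mod_lt _ (by omega)
  -- m/δ = k/δ
  have hdd : m/δ = k/δ := by
    have h1 : k/δ ≤ m/δ := Nat.div_le_div_right (by omega)
    have h2 : m/δ ≤ k/δ := by
      by_contra h
      have : (m/δ) ≥ k/δ + 1 := by omega
      have : δ * (k/δ + 1) ≤ δ * (m/δ) := Nat.mul_le_mul_left _ this
      rw [Nat.mul_add] at this
      omega
    omega
  -- m/a = k/a + 1
  have haa : m/a = k/a + 1 := by
    have h1 : k/a + 1 ≤ m/a := by
      by_contra h
      have h2 : m/a ≤ k/a := by omega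
      have : a * (m/a) ≤ a * (k/a) := Nat.mul_le_mul_left _ h2
      omega
    have h2 : m/a ≤ k/a + 1 := by
      have hma : m ≤ k + a := by omega
      have := Nat.div_le_div_right (c := a) hma
      rwa [Nat.add_div_right _ ha] at this
    omega
  simp only [w, ← hkdef, haa, hdd, Nat.mul_add, Nat.mul_one]
  omega

lemma count_shift (p : ℕ → Prop) [DecidablePred p] (K : ℕ) (hp : ∀ m, p m ↔ p (m + K)) (N : ℕ) :
    ((Finset.Ico N (N+K)).filter p).card = ((Finset.range K).filter p).card := by
  induction N with
  | zero =>
    have h0 : (0:ℕ) + K = K := Nat.zero_add K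
    rw [h0, Finset.range_eq_Ico]
  | succ n ih =>
    rw [← ih]
    rcases Nat.eq_zero_or_pos K with h | h
    · simp [h]
    · have e1 : Finset.Ico n (n+K) = insert n (Finset.Ico (n+1) (n+K)) :=
        (Finset.insert_Ico_add_one_left_eq_Ico (by omega)).symm
      have e2 : Finset.Ico (n+1) (n+1+K) = insert (n+K) (Finset.Ico (n+1) (n+K)) := by
        rw [show n+1+K = (n+K)+1 by omega]
        exact Nat.Ico_succ_right_eq_insert_Ico (by omega)
      rw [e1, e2, Finset.filter_insert, Finset.filter_insert]
      by_cases hpn : p n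
      · rw [if_pos hpn, if_pos ((hp n).mp hpn)]
        rw [Finset.card_insert_of_notMem (by simp), Finset.card_insert_of_notMem (by simp)]
      · rw [if_neg hpn, if_neg (fun h => hpn ((hp n).mpr h))]

lemma crt_count (a δ : ℕ) (ha : 0 < a) (hδ : 0 < δ) (hco : Nat.Coprime a δ) (d : ℕ) (hd : d ≤ a) :
    ((Finset.range (a*δ)).filter (fun m => m % a < d ∧ d ≤ m % δ)).card = d * (δ - d) := by
  rw [show d * (δ - d) = ((Finset.range d) ×ˢ (Finset.Ico d δ)).card by
    rw [Finset.card_product, Finset.card_range, Nat.card_Ico]]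
  apply Finset.card_bij (fun m _ => (m % a, m % δ))
  · intro m hm
    simp only [Finset.mem_filter, Finset.mem_range] at hm
    simp only [Finset.mem_product, Finset.mem_range, Finset.mem_Ico]
    exact ⟨hm.2.1, hm.2.2, Nat.mod_lt _ hδ⟩
  · intro m1 h1 m2 h2 he
    simp only [Finset.mem_filter, Finset.mem_range] at h1 h2
    simp only [Prod.mk.injEq] at he
    have h1' : m1 ≡ m2 [MOD a] := he.1
    have h2' : m1 ≡ m2 [MOD δ] := he.2
    have h3 := (Nat.modEq_and_modEq_iff_modEq_mul hco).mp ⟨h1', h2'⟩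
    rw [Nat.ModEq] at h3
    rwa [Nat.mod_eq_of_lt h1.1, Nat.mod_eq_of_lt h2.1] at h3
  · rintro ⟨r, s⟩ hrs
    simp only [Finset.mem_product, Finset.mem_range, Finset.mem_Ico] at hrs
    obtain ⟨hc1, hc2⟩ := (Nat.chineseRemainder hco r s).2
    set c := ((Nat.chineseRemainder hco r s) : ℕ) with hcdef
    have hma : c % (a*δ) % a = c % a := Nat.mod_mod_of_dvd _ (dvd_mul_right a δ)
    have hmd : c % (a*δ) % δ = c % δ := Nat.mod_mod_of_dvd _ (dvd_mul_left δ a)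
    rw [Nat.ModEq] at hc1 hc2
    have h1 : c % a = r := by rw [hc1]; exact Nat.mod_eq_of_lt (by omega)
    have h2 : c % δ = s := by rw [hc2]; exact Nat.mod_eq_of_lt (by omega)
    refine ⟨c % (a*δ), ?_, ?_⟩
    · simp only [Finset.mem_filter, Finset.mem_range]
      refine ⟨Nat.mod_lt _ (Nat.mul_pos ha hδ), ?_, ?_⟩ <;> omega
    · rw [hma, hmd, h1, h2]


/-- In one heap-period of length `(3δ + a)·a`, exactly `a²` positions lie in `W3`. -/
theorem stmt_13 (a δ : ℕ) (ha : 0 < a) (hlt : a < δ) (hlt2 : δ < 2 * a)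
    (hgcd : Nat.gcd a δ = 1) (b : ℕ) (hb : b = a + δ) :
    {x : ℕ | x < (3 * δ + a) * a ∧ x ∈ W3 a b δ}.ncard = a ^ 2 := by
  subst hb
  have hδ : 0 < δ := by omega
  set P := (3 * δ + a) * a with hP
  have hex : ∃ m, δ ≤ w a (a+δ) δ m := ⟨δ, w_ge a δ δ⟩
  set m0 := Nat.find hex with hm0
  have hm0spec : δ ≤ w a (a+δ) δ m0 := Nat.find_spec hex
  have hm0min : ∀ k, k < m0 → w a (a+δ) δ k < δ := fun k hk => by
    have := Nat.find_min hex hk; omega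
  have hm0pos : 0 < m0 := by
    rcases Nat.eq_zero_or_pos m0 with h | h
    · exfalso; rw [h] at hm0spec; simp [w] at hm0spec; omega
    · exact h
  have hwin1 : ∀ m, m0 ≤ m ↔ δ ≤ w a (a+δ) δ m := by
    intro m
    constructor
    · intro h; exact le_trans hm0spec ((w_mono a δ).le_iff_le.mpr h)
    · intro h; by_contra hc
      have := hm0min m (by omega); omega
  have hwin2 : ∀ m, m < m0 + a*δ ↔ w a (a+δ) δ m < δ + P := by
    intro m
    constructor
    · intro h
      have h1 : m ≤ (m0 - 1) + a*δ := by omega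
      have h2 := (w_mono a δ).le_iff_le.mpr h1
      rw [w_period a δ ha hδ] at h2
      have h3 := hm0min (m0-1) (by omega)
      omega
    · intro h; by_contra hc
      have h1 : m0 + a*δ ≤ m := by omega
      have h2 := (w_mono a δ).le_iff_le.mpr h1
      rw [w_period a δ ha hδ] at h2
      omega
  set S : Finset ℕ :=
    (Finset.Ico m0 (m0 + a*δ)).filter (fun m => δ - a ≤ m % a ∨ m % δ < δ - a) with hS
  have hsets : {x : ℕ | x < P ∧ x ∈ W3 a (a+δ) δ} = (fun m => w a (a+δ) δ m - δ) '' ↑S := by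
    ext x
    simp only [Set.mem_setOf_eq, Set.mem_image, W3, W0, Set.mem_range, hS,
      Finset.coe_filter, Finset.mem_Ico]
    constructor
    · rintro ⟨hxP, ⟨m, hm⟩, hnot⟩
      refine ⟨m, ⟨⟨?_, ?_⟩, ?_⟩, ?_⟩
      · exact (hwin1 m).mpr (by omega)
      · exact (hwin2 m).mpr (by omega)
      · by_contra hc
        rw [not_or, not_le, not_lt] at hc
        have hbw := char_bwd a δ ha hlt hlt2 m hc.1 hc.2
        exact hnot ⟨m - (δ - a), by omega⟩
      · omega
    · rintro ⟨m, ⟨⟨h1, h2⟩, hCm⟩, rfl⟩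
      have hδm : δ ≤ w a (a+δ) δ m := (hwin1 m).mp h1
      have hPm : w a (a+δ) δ m < δ + P := (hwin2 m).mp h2
      refine ⟨by omega, ⟨m, by omega⟩, ?_⟩
      rintro ⟨k, hk⟩
      have hfw := char_fwd a δ ha hlt hlt2 m k (by omega)
      omega
  rw [hsets, Set.ncard_image_of_injOn, Set.ncard_coe_finset]
  · -- card computation
    have hdec : S.card + ((Finset.Ico m0 (m0 + a*δ)).filter
        (fun m => ¬(δ - a ≤ m % a ∨ m % δ < δ - a))).card = a*δ := by
      rw [hS, Finset.card_filter_add_card_filter_not, Nat.card_Ico]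
      omega
    have hre : ((Finset.Ico m0 (m0 + a*δ)).filter
        (fun m => ¬(δ - a ≤ m % a ∨ m % δ < δ - a))).card
        = ((Finset.Ico m0 (m0 + a*δ)).filter
        (fun m => m % a < δ - a ∧ δ - a ≤ m % δ)).card := by
      congr 1
      apply Finset.filter_congr
      intro m _
      simp only [not_or, not_le, not_lt]
    have hT : ((Finset.Ico m0 (m0 + a*δ)).filter
        (fun m => m % a < δ - a ∧ δ - a ≤ m % δ)).card = (δ-a) * (δ - (δ-a)) := by
      rw [count_shift _ (a*δ) ?_ m0]
      · exact crt_count a δ ha hδ hgcd (δ-a) (by omega)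
      · intro m
        have h1 : (m + a*δ) % a = m % a := Nat.add_mul_mod_self_left m a δ
        have h2 : (m + a*δ) % δ = m % δ := by
          rw [mul_comm]; exact Nat.add_mul_mod_self_left m δ a
        rw [h1, h2]
    have hda : δ - (δ-a) = a := by omega
    rw [hda] at hT
    have hkey : (δ-a)*a + a*a = δ*a := by
      rw [← Nat.add_mul, Nat.sub_add_cancel hlt.le]
    have hcomm : a*δ = δ*a := Nat.mul_comm a δ
    rw [pow_two]
    omega
  · -- injOn
    intro m1 h1 m2 h2 he
    simp only [hS, Finset.coe_filter, Set.mem_setOf_eq, Finset.mem_Ico] at h1 h2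
    have hd1 : δ ≤ w a (a+δ) δ m1 := (hwin1 m1).mp h1.1.1
    have hd2 : δ ≤ w a (a+δ) δ m2 := (hwin1 m2).mp h2.1.1
    simp only at he
    have : w a (a+δ) δ m1 = w a (a+δ) δ m2 := by omega
    exact (w_mono a δ).injective this
end

section
/- The four sets W0, W1, W2, W3 are pairwise disjoint and their union is all of ℕ. -/
/-- `W1 = W0 + a`. -/
def W1 (a b δ : ℕ) : Set ℕ := {x | ∃ n, x = w a b δ n + a}

/-- `W2 = {x : x + b ∈ W0}`. -/
def W2 (a b δ : ℕ) : Set ℕ := {x | x + b ∈ W0 a b δ}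

theorem Nat.mod_add_eq_mul_div_sub_add_mod (k n d : ℕ) :
    n % k + d = k * ((n + d) / k - n / k) + (n + d) % k := by
  have hle : k * (n / k) ≤ k * ((n + d) / k) :=
    Nat.mul_le_mul_left k (Nat.div_le_div_right (Nat.le_add_right n d))
  have := Nat.div_add_mod n k
  have := Nat.div_add_mod (n + d) k
  rw [Nat.mul_sub]
  omega

theorem Nat.card_filter_le_mod_Ico (a r c : ℕ) :
    ((Finset.Ico c (c + a)).filter (fun n => r ≤ n % a)).card = a - r := by
  rw [Nat.filter_Ico_card_eq_of_periodic c a _ (fun n => by simp only [Nat.add_mod_right]),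
    Nat.count_eq_card_filter_range]
  have hfilter : (Finset.range a).filter (fun t => r ≤ t % a) = Finset.Ico r a := by
    ext t
    simp only [Finset.mem_filter, Finset.mem_range, Finset.mem_Ico]
    constructor
    · rintro ⟨ht, hrt⟩; rw [Nat.mod_eq_of_lt ht] at hrt; exact ⟨hrt, ht⟩
    · rintro ⟨hrt, ht⟩; rw [Nat.mod_eq_of_lt ht]; exact ⟨ht, hrt⟩
  rw [hfilter, Nat.card_Ico]

/-- In a block `[δk, δk + δ)` only the first `a` integers have `n % δ < a`, and these run once
through all residues mod `a`. -/
theorem Nat.card_filter_two_mul_le_mod_add_and_mod_lt {a δ : ℕ} (hle : a ≤ δ)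
    (hle2 : δ ≤ 2 * a) (k : ℕ) :
    ((Finset.range (δ * k)).filter (fun n => 2 * a ≤ n % a + δ ∧ n % δ < a)).card
      = k * (δ - a) := by
  induction k with
  | zero => simp
  | succ k ih =>
    have hblock : ((Finset.Ico (δ * k) (δ * k + δ)).filter
        (fun n => 2 * a ≤ n % a + δ ∧ n % δ < a)).card = δ - a := by
      rw [show δ - a = a - (2 * a - δ) by omega, ← Nat.card_filter_le_mod_Ico a _ (δ * k)]
      congr 1
      ext n
      simp only [Finset.mem_filter, Finset.mem_Ico]
      constructor
      · rintro ⟨⟨h1, h2⟩, h3, h4⟩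
        obtain ⟨t, rfl⟩ := Nat.exists_eq_add_of_le h1
        rw [Nat.mul_add_mod, Nat.mod_eq_of_lt (show t < δ by omega)] at h4
        omega
      · rintro ⟨⟨h1, h2⟩, h3⟩
        obtain ⟨t, rfl⟩ := Nat.exists_eq_add_of_le h1
        rw [Nat.mul_add_mod, Nat.mod_eq_of_lt (show t < δ by omega)]
        omega
    rw [Nat.mul_succ, Finset.range_eq_Ico, ← Finset.Ico_union_Ico_eq_Ico (Nat.zero_le _)
      (Nat.le_add_right _ _), Finset.filter_union, Finset.card_union_of_disjoint
      (Finset.disjoint_filter_filter (Finset.Ico_disjoint_Ico_consecutive _ _ _)),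
      ← Finset.range_eq_Ico, ih, hblock, Nat.succ_mul]

theorem Finset.card_filter_Ico_add {p : ℕ → Prop} [DecidablePred p] (s t c : ℕ) :
    ((Finset.Ico s t).filter (fun y => p (y + c))).card
      = ((Finset.Ico (s + c) (t + c)).filter p).card := by
  rw [← Finset.map_add_right_Ico, Finset.filter_map, Finset.card_map]
  rfl

theorem Finset.card_filter_mem_union_of_disjoint {α : Type*} [DecidableEq α] (X : Finset α)
    {A B : Set α} [DecidablePred (· ∈ A)] [DecidablePred (· ∈ B)] (h : Disjoint A B) :
    (X.filter (· ∈ A ∪ B)).card = (X.filter (· ∈ A)).card + (X.filter (· ∈ B)).card := by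
  rw [← Finset.card_union_of_disjoint
    (Finset.disjoint_filter.2 fun _ _ hA hB => Set.disjoint_left.1 h hA hB)]
  congr 1
  ext y
  simp only [Finset.mem_union, Finset.mem_filter, Set.mem_union, and_or_left]

open Classical

section
variable {a b δ : ℕ}

theorem w_strictMono : StrictMono (w a b δ) :=
  (strictMono_id.add_monotone fun _ _ h =>
    Nat.mul_le_mul_left a (Nat.div_le_div_right h)).add_monotone fun _ _ h =>
      Nat.mul_le_mul_left b (Nat.div_le_div_right h)

theorem w_add (n d : ℕ) :
    w a b δ (n + d) = w a b δ n + d + a * ((n + d) / a - n / a) + b * ((n + d) / δ - n / δ) := by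
  have ha : a * (n / a) ≤ a * ((n + d) / a) :=
    Nat.mul_le_mul_left a (Nat.div_le_div_right (Nat.le_add_right n d))
  have hδ : b * (n / δ) ≤ b * ((n + d) / δ) :=
    Nat.mul_le_mul_left b (Nat.div_le_div_right (Nat.le_add_right n d))
  rw [w, w, Nat.mul_sub, Nat.mul_sub]
  omega

theorem exists_w_add_eq (n d : ℕ) :
    ∃ A D, w a b δ (n + d) = w a b δ n + d + a * A + b * D ∧
      n % a + d = a * A + (n + d) % a ∧ n % δ + d = δ * D + (n + d) % δ :=
  ⟨_, _, w_add n d, Nat.mod_add_eq_mul_div_sub_add_mod a n d,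
    Nat.mod_add_eq_mul_div_sub_add_mod δ n d⟩

theorem w_add_period (ha : 0 < a) (hδ : 0 < δ) (n : ℕ) :
    w a b δ (n + a * δ) = w a b δ n + (2 * a * δ + a * b) := by
  have hdiv_a : (n + a * δ) / a = n / a + δ := Nat.add_mul_div_left n δ ha
  have hdiv_δ : (n + a * δ) / δ = n / δ + a := by
    rw [mul_comm]; exact Nat.add_mul_div_left n a hδ
  rw [w, w, hdiv_a, hdiv_δ]
  ring

theorem w_add_ne (ha : 0 < a) (hlt : a < δ) (hlt2 : δ < 2 * a) (hb : b = a + δ) {c : ℕ}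
    (hc : c = a ∨ c = b ∨ c = a + b) (m n : ℕ) : w a b δ m ≠ w a b δ n + c := by
  intro h
  obtain ⟨d, rfl⟩ := Nat.exists_eq_add_of_lt
    (w_strictMono.lt_iff_lt.1 (by omega : w a b δ n < w a b δ m))
  obtain ⟨A, D, hw, hA, hD⟩ := exists_w_add_eq (a := a) (b := b) (δ := δ) n (d + 1)
  rw [← add_assoc] at hw
  have := Nat.mod_lt n ha
  have := Nat.mod_lt n (ha.trans hlt)
  have := Nat.mod_lt (n + (d + 1)) ha
  have := Nat.mod_lt (n + (d + 1)) (ha.trans hlt)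
  subst hb
  rcases A with _ | _ | _ | A <;> rcases D with _ | _ | D <;>
    simp only [Nat.mul_succ, Nat.mul_zero] at hw hA hD <;> omega

theorem self_le_w (n : ℕ) : n ≤ w a b δ n := by
  unfold w; omega

variable (a b δ) in
noncomputable def wIndex (s : ℕ) : ℕ :=
  Nat.find (p := fun m => s ≤ w a b δ m) ⟨s, self_le_w s⟩

theorem le_w_iff_wIndex_le {s m : ℕ} : s ≤ w a b δ m ↔ wIndex a b δ s ≤ m := by
  refine ⟨fun h => Nat.find_min' _ h, fun h => ?_⟩
  exact (Nat.find_spec (p := fun m => s ≤ w a b δ m) ⟨s, self_le_w s⟩).trans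
    (w_strictMono.monotone h)

theorem filter_Ico_mem_W0 (s t : ℕ) :
    (Finset.Ico s t).filter (· ∈ W0 a b δ)
      = (Finset.Ico (wIndex a b δ s) (wIndex a b δ t)).image (w a b δ) := by
  ext y
  simp only [Finset.mem_filter, Finset.mem_Ico, Finset.mem_image, W0, Set.mem_range]
  constructor
  · rintro ⟨⟨hs, ht⟩, m, rfl⟩
    exact ⟨m, ⟨le_w_iff_wIndex_le.1 hs, not_le.1 (mt le_w_iff_wIndex_le.2 (not_le.2 ht))⟩, rfl⟩
  · rintro ⟨m, ⟨hs, ht⟩, rfl⟩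
    exact ⟨⟨le_w_iff_wIndex_le.2 hs, not_le.1 (mt le_w_iff_wIndex_le.1 (not_le.2 ht))⟩, m, rfl⟩

theorem wIndex_add_period (ha : 0 < a) (hδ : 0 < δ) (s : ℕ) :
    wIndex a b δ (s + (2 * a * δ + a * b)) = wIndex a b δ s + a * δ := by
  apply le_antisymm
  · rw [← le_w_iff_wIndex_le, w_add_period ha hδ]
    exact Nat.add_le_add_right (le_w_iff_wIndex_le.2 le_rfl) _
  · have hm := le_w_iff_wIndex_le.2 (le_refl (wIndex a b δ (s + (2 * a * δ + a * b))))
    have hge : a * δ ≤ wIndex a b δ (s + (2 * a * δ + a * b)) := by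
      by_contra hlt
      have hw0 := w_add_period (b := b) ha hδ 0
      have := w_strictMono (a := a) (b := b) (δ := δ) (not_le.1 hlt)
      simp only [w, zero_add, Nat.zero_div, mul_zero, add_zero] at hw0 this hm
      omega
    obtain ⟨m, hm_eq⟩ := Nat.exists_eq_add_of_le' hge
    rw [hm_eq, w_add_period ha hδ] at hm
    rw [hm_eq]
    exact Nat.add_le_add_right (le_w_iff_wIndex_le.1 (by omega)) _

theorem card_filter_Ico_mem_W0 (ha : 0 < a) (hδ : 0 < δ) (s : ℕ) :
    ((Finset.Ico s (s + (2 * a * δ + a * b))).filter (· ∈ W0 a b δ)).card = a * δ := by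
  rw [filter_Ico_mem_W0, wIndex_add_period ha hδ, Finset.card_image_of_injective _
    w_strictMono.injective, Nat.card_Ico, Nat.add_sub_cancel_left]

theorem w_add_δ_mem_W0_iff (ha : 0 < a) (hlt : a < δ) (hlt2 : δ < 2 * a) (hb : b = a + δ)
    (n : ℕ) : w a b δ n + δ ∈ W0 a b δ ↔ 2 * a ≤ n % a + δ ∧ n % δ < a := by
  have := Nat.mod_lt n ha
  have := Nat.mod_lt n (ha.trans hlt)
  subst hb
  constructor
  · rintro ⟨m, hm⟩
    obtain ⟨d, rfl⟩ := Nat.exists_eq_add_of_lt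
      (w_strictMono.lt_iff_lt.1 (by omega : w a (a + δ) δ n < w a (a + δ) δ m))
    obtain ⟨A, D, hw, hA, hD⟩ := exists_w_add_eq (a := a) (b := a + δ) (δ := δ) n (d + 1)
    rw [← add_assoc] at hw
    have := Nat.mod_lt (n + (d + 1)) ha
    have := Nat.mod_lt (n + (d + 1)) (ha.trans hlt)
    rcases A with _ | _ | A <;> rcases D with _ | D <;>
      simp only [Nat.mul_succ, Nat.mul_zero] at hw hA hD <;> omega
  · rintro ⟨hna, hnδ⟩
    refine ⟨n + (δ - a), ?_⟩
    obtain ⟨A, D, hw, hA, hD⟩ := exists_w_add_eq (a := a) (b := a + δ) (δ := δ) n (δ - a)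
    have := Nat.mod_lt (n + (δ - a)) ha
    have := Nat.mod_lt (n + (δ - a)) (ha.trans hlt)
    rcases A with _ | _ | A <;> rcases D with _ | D <;>
      simp only [Nat.mul_succ, Nat.mul_zero] at hw hA hD <;> omega

theorem card_filter_Ico_mem_W0_and_add_mem_W0 (ha : 0 < a) (hlt : a < δ) (hlt2 : δ < 2 * a)
    (hb : b = a + δ) (s : ℕ) :
    ((Finset.Ico s (s + (2 * a * δ + a * b))).filter
      (fun y => y ∈ W0 a b δ ∧ y + δ ∈ W0 a b δ)).card = a * (δ - a) := by
  have hδ : 0 < δ := ha.trans hlt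
  rw [← Finset.filter_filter, filter_Ico_mem_W0, wIndex_add_period ha hδ, Finset.filter_image,
    Finset.card_image_of_injective _ w_strictMono.injective,
    Finset.filter_congr fun n _ => w_add_δ_mem_W0_iff ha hlt hlt2 hb n,
    Nat.filter_Ico_card_eq_of_periodic _ _ _ fun n => by
      simp only [Nat.add_mul_mod_self_left, Nat.add_mul_mod_self_right],
    Nat.count_eq_card_filter_range, mul_comm a δ,
    Nat.card_filter_two_mul_le_mod_add_and_mod_lt hlt.le hlt2.le]

theorem add_mem_W1_iff {y : ℕ} : y + a ∈ W1 a b δ ↔ y ∈ W0 a b δ :=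
  ⟨fun ⟨n, hn⟩ => ⟨n, by omega⟩, fun ⟨n, hn⟩ => ⟨n, by omega⟩⟩

theorem W_pairwise_disjoint (ha : 0 < a) (hlt : a < δ) (hlt2 : δ < 2 * a) (hb : b = a + δ) :
    Disjoint (W0 a b δ) (W1 a b δ) ∧ Disjoint (W0 a b δ) (W2 a b δ) ∧
    Disjoint (W0 a b δ) (W3 a b δ) ∧ Disjoint (W1 a b δ) (W2 a b δ) ∧
    Disjoint (W1 a b δ) (W3 a b δ) ∧ Disjoint (W2 a b δ) (W3 a b δ) := by
  have hne := fun c (hc : c = a ∨ c = b ∨ c = a + b) => w_add_ne ha hlt hlt2 hb hc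
  refine ⟨?_, ?_, ?_, ?_, ?_, ?_⟩ <;> rw [Set.disjoint_left]
  · rintro _ ⟨m, rfl⟩ ⟨n, hn⟩
    exact hne a (Or.inl rfl) m n hn
  · rintro _ ⟨m, rfl⟩ ⟨k, hk⟩
    exact hne b (Or.inr (Or.inl rfl)) k m hk
  · rintro _ hx ⟨_, hx'⟩
    exact hx' hx
  · rintro _ ⟨n, rfl⟩ ⟨k, hk⟩
    exact hne (a + b) (Or.inr (Or.inr rfl)) k n (by omega)
  · rintro _ ⟨n, rfl⟩ ⟨⟨k, hk⟩, _⟩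
    exact hne b (Or.inr (Or.inl rfl)) k n (by omega)
  · rintro _ ⟨k, hk⟩ ⟨⟨j, hj⟩, _⟩
    exact hne a (Or.inl rfl) k j (by omega)

theorem card_filter_Ico_mem_W1 (ha : 0 < a) (hδ : 0 < δ) {s : ℕ} (hs : a ≤ s) :
    ((Finset.Ico s (s + (2 * a * δ + a * b))).filter (· ∈ W1 a b δ)).card = a * δ := by
  rw [← Nat.sub_add_cancel hs, add_right_comm, ← Finset.card_filter_Ico_add,
    Finset.filter_congr fun y _ => add_mem_W1_iff, card_filter_Ico_mem_W0 ha hδ]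

theorem card_filter_Ico_mem_W2 (ha : 0 < a) (hδ : 0 < δ) (s : ℕ) :
    ((Finset.Ico s (s + (2 * a * δ + a * b))).filter (· ∈ W2 a b δ)).card = a * δ :=
  calc ((Finset.Ico s (s + (2 * a * δ + a * b))).filter (· ∈ W2 a b δ)).card
      = ((Finset.Ico s (s + (2 * a * δ + a * b))).filter (fun y => y + b ∈ W0 a b δ)).card :=
        congrArg Finset.card (Finset.filter_congr fun _ _ => Iff.rfl)
    _ = a * δ := by
        rw [Finset.card_filter_Ico_add (p := (· ∈ W0 a b δ)), add_right_comm,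
          card_filter_Ico_mem_W0 ha hδ]

theorem card_filter_Ico_mem_W3 (ha : 0 < a) (hlt : a < δ) (hlt2 : δ < 2 * a) (hb : b = a + δ)
    (s : ℕ) : ((Finset.Ico s (s + (2 * a * δ + a * b))).filter (· ∈ W3 a b δ)).card = a * a := by
  have hsplit := Finset.card_filter_add_card_filter_not
    (s := (Finset.Ico s (s + (2 * a * δ + a * b))).filter (fun y => y + δ ∈ W0 a b δ))
    (· ∈ W0 a b δ)
  rw [Finset.filter_filter, Finset.filter_filter,
    Finset.card_filter_Ico_add (p := (· ∈ W0 a b δ)), add_right_comm,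
    card_filter_Ico_mem_W0 ha (ha.trans hlt), Finset.filter_congr fun y _ => and_comm,
    card_filter_Ico_mem_W0_and_add_mem_W0 ha hlt hlt2 hb, Nat.mul_sub] at hsplit
  have hW3 : (Finset.Ico s (s + (2 * a * δ + a * b))).filter (· ∈ W3 a b δ)
      = (Finset.Ico s (s + (2 * a * δ + a * b))).filter
        (fun y => y + δ ∈ W0 a b δ ∧ y ∉ W0 a b δ) :=
    Finset.filter_congr fun _ _ => Iff.rfl
  have : a * a ≤ a * δ := Nat.mul_le_mul_left a hlt.le
  rw [hW3]
  omega

theorem W0_union_W1_union_W2_union_W3_eq_univ (ha : 0 < a) (hlt : a < δ) (hlt2 : δ < 2 * a)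
    (hb : b = a + δ) : W0 a b δ ∪ W1 a b δ ∪ W2 a b δ ∪ W3 a b δ = Set.univ := by
  obtain ⟨h01, h02, h03, h12, h13, h23⟩ := W_pairwise_disjoint ha hlt hlt2 hb
  have hδ : 0 < δ := ha.trans hlt
  refine Set.eq_univ_of_forall fun x => ?_
  rcases lt_or_ge x a with hx | hx
  · refine Or.inl (Or.inl (Or.inl ⟨x, ?_⟩))
    simp [w, Nat.div_eq_of_lt hx, Nat.div_eq_of_lt (hx.trans hlt)]
  have hcard : ((Finset.Ico x (x + (2 * a * δ + a * b))).filter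
      (· ∈ W0 a b δ ∪ W1 a b δ ∪ W2 a b δ ∪ W3 a b δ)).card
      = (Finset.Ico x (x + (2 * a * δ + a * b))).card := by
    rw [Finset.card_filter_mem_union_of_disjoint _
        (Set.disjoint_union_left.2 ⟨Set.disjoint_union_left.2 ⟨h03, h13⟩, h23⟩),
      Finset.card_filter_mem_union_of_disjoint _ (Set.disjoint_union_left.2 ⟨h02, h12⟩),
      Finset.card_filter_mem_union_of_disjoint _ h01, card_filter_Ico_mem_W0 ha hδ,
      card_filter_Ico_mem_W1 ha hδ hx, card_filter_Ico_mem_W2 ha hδ,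
      card_filter_Ico_mem_W3 ha hlt hlt2 hb, Nat.card_Ico, hb]
    rw [Nat.add_sub_cancel_left]
    ring
  exact Finset.filter_card_eq hcard x
    (Finset.mem_Ico.2 ⟨le_rfl, Nat.lt_add_of_pos_right (by positivity)⟩)

end

theorem stmt_14_general (a δ : ℕ) (ha : 0 < a) (hlt : a < δ) (hlt2 : δ < 2 * a)
    (b : ℕ) (hb : b = a + δ) :
    Disjoint (W0 a b δ) (W1 a b δ) ∧
    Disjoint (W0 a b δ) (W2 a b δ) ∧
    Disjoint (W0 a b δ) (W3 a b δ) ∧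
    Disjoint (W1 a b δ) (W2 a b δ) ∧
    Disjoint (W1 a b δ) (W3 a b δ) ∧
    Disjoint (W2 a b δ) (W3 a b δ) ∧
    W0 a b δ ∪ W1 a b δ ∪ W2 a b δ ∪ W3 a b δ = Set.univ := by
  obtain ⟨h01, h02, h03, h12, h13, h23⟩ := W_pairwise_disjoint ha hlt hlt2 hb
  exact ⟨h01, h02, h03, h12, h13, h23, W0_union_W1_union_W2_union_W3_eq_univ ha hlt hlt2 hb⟩

/-- The four sets `W0, W1, W2, W3` are pairwise disjoint and partition `ℕ`. -/
theorem stmt_14 (a δ : ℕ) (ha : 0 < a) (hlt : a < δ) (hlt2 : δ < 2 * a)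
    (hgcd : Nat.gcd a δ = 1) (b : ℕ) (hb : b = a + δ) :
    Disjoint (W0 a b δ) (W1 a b δ) ∧
    Disjoint (W0 a b δ) (W2 a b δ) ∧
    Disjoint (W0 a b δ) (W3 a b δ) ∧
    Disjoint (W1 a b δ) (W2 a b δ) ∧
    Disjoint (W1 a b δ) (W3 a b δ) ∧
    Disjoint (W2 a b δ) (W3 a b δ) ∧
    W0 a b δ ∪ W1 a b δ ∪ W2 a b δ ∪ W3 a b δ = Set.univ :=
  stmt_14_general a δ ha hlt hlt2 b hb
end

section
/- For every x ∈ W3, G(x) = 3. -/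
/-- `mex T` is the least natural number not in `T`. -/
noncomputable def mex (T : Set ℕ) : ℕ := sInf {n | n ∉ T}

namespace SubtractionGame

structure Admissible (a b δ : ℕ) : Prop where
  lt : a < δ
  lt_two_mul : δ < 2 * a
  eq_add : b = a + δ

variable {a b δ : ℕ}

theorem w_add_sub_le {m n : ℕ} (hmn : m ≤ n) : w a b δ m + (n - m) ≤ w a b δ n := by
  have h₁ : a * (m / a) ≤ a * (n / a) := Nat.mul_le_mul_left a (Nat.div_le_div_right hmn)
  have h₂ : b * (m / δ) ≤ b * (n / δ) := Nat.mul_le_mul_left b (Nat.div_le_div_right hmn)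
  simp only [w]
  omega

/-- From `m` to `n`, `w` grows by `n - m` plus `P = a k` and `Q = b l`, where `k` and `l` count the
multiples of `a` and of `δ` in `(m, n]` (and `D = δ l`); the possible values are listed so that
`omega` can use them. -/
theorem w_increment (hlt : a < δ) (hlt2 : δ < 2 * a) {m n : ℕ} (hmn : m ≤ n)
    (hnm : n ≤ m + 2 * (a + δ)) :
    ∃ P D Q, w a b δ n = w a b δ m + (n - m) + P + Q ∧
      P + n % a = n - m + m % a ∧ D + n % δ = n - m + m % δ ∧
      m % a < a ∧ n % a < a ∧ m % δ < δ ∧ n % δ < δ ∧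
      (P = 0 ∨ P = a ∨ P = 2 * a ∨ P = 3 * a ∨ P = 4 * a ∨ P = 5 * a ∨ P = 6 * a) ∧
      (D = 0 ∧ Q = 0 ∨ D = δ ∧ Q = b ∨ D = 2 * δ ∧ Q = 2 * b ∨ D = 3 * δ ∧ Q = 3 * b ∨
        D = 4 * δ ∧ Q = 4 * b) := by
  obtain ⟨K, hK⟩ : ∃ K, n / a = m / a + K :=
    ⟨_, (Nat.add_sub_cancel' (Nat.div_le_div_right hmn)).symm⟩
  obtain ⟨L, hL⟩ : ∃ L, n / δ = m / δ + L :=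
    ⟨_, (Nat.add_sub_cancel' (Nat.div_le_div_right hmn)).symm⟩
  have := Nat.div_add_mod m a
  have := Nat.div_add_mod n a
  have := Nat.div_add_mod m δ
  have := Nat.div_add_mod n δ
  have := Nat.mod_lt m (show 0 < a by omega)
  have := Nat.mod_lt n (show 0 < a by omega)
  have := Nat.mod_lt m (show 0 < δ by omega)
  have := Nat.mod_lt n (show 0 < δ by omega)
  have eK : a * (n / a) = a * (m / a) + a * K := by rw [hK, Nat.mul_add]
  have eL : δ * (n / δ) = δ * (m / δ) + δ * L := by rw [hL, Nat.mul_add]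
  have eL' : b * (n / δ) = b * (m / δ) + b * L := by rw [hL, Nat.mul_add]
  have hK7 : K < 7 := by
    by_contra hK7
    have : a * 7 ≤ a * K := Nat.mul_le_mul_left a (by omega)
    omega
  have hL5 : L < 5 := by
    by_contra hL5
    have : δ * 5 ≤ δ * L := Nat.mul_le_mul_left δ (by omega)
    omega
  refine ⟨a * K, δ * L, b * L, ?_, by omega, by omega, by omega, by omega, by omega, by omega, ?_, ?_⟩
  · simp only [w]
    omega
  · interval_cases K <;> omega
  · interval_cases L <;> omega

theorem le_w (n : ℕ) : n ≤ w a b δ n := by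
  unfold w
  omega

theorem le_add_of_w_add_eq {m p d : ℕ} (he : w a b δ m + d = w a b δ p) : m ≤ p ∧ p ≤ m + d := by
  have hmp : m ≤ p := by
    by_contra! hpm
    have := w_add_sub_le (a := a) (b := b) (δ := δ) hpm.le
    omega
  have := w_add_sub_le (a := a) (b := b) (δ := δ) hmp
  omega

theorem w_add_ne (h : Admissible a b δ) {s : ℕ} (hs : s ∈ ({a, b, a + b} : Set ℕ)) (m p : ℕ) :
    w a b δ m + s ≠ w a b δ p := by
  obtain ⟨hlt, hlt2, hb⟩ := h
  intro he
  obtain ⟨hmp, hpm⟩ := le_add_of_w_add_eq he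
  simp only [Set.mem_insert_iff, Set.mem_singleton_iff] at hs
  obtain ⟨P, D, Q, hw⟩ := w_increment (b := b) hlt hlt2 hmp (by omega)
  rcases hs with rfl | rfl | rfl <;> omega

/-- `x ∈ W0 + s`, stated without the truncated subtraction `x - s`. -/
def MemW0Add (a b δ s x : ℕ) : Prop := ∃ p, w a b δ p + s = x

theorem le_of_memW0Add {s x : ℕ} (h : MemW0Add a b δ s x) : s ≤ x := by
  obtain ⟨p, rfl⟩ := h
  omega

theorem memW0Add_zero_iff {x : ℕ} : MemW0Add a b δ 0 x ↔ x ∈ W0 a b δ := by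
  simp [MemW0Add, W0]

theorem memW0Add_congr {c d x y : ℕ} (h : c + y = d + x) :
    MemW0Add a b δ c x ↔ MemW0Add a b δ d y :=
  ⟨fun ⟨p, hp⟩ => ⟨p, by omega⟩, fun ⟨p, hp⟩ => ⟨p, by omega⟩⟩

theorem memW0Add_or_memW0Add {p c d x : ℕ} (h : w a b δ p + c = x ∨ w a b δ p + d = x) :
    MemW0Add a b δ c x ∨ MemW0Add a b δ d x :=
  h.imp (⟨p, ·⟩) (⟨p, ·⟩)

theorem not_memW0Add_add (h : Admissible a b δ) {s c x : ℕ} (hs : s ∈ ({a, b, a + b} : Set ℕ))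
    (hc : MemW0Add a b δ c x) : ¬MemW0Add a b δ (c + s) x := by
  rintro ⟨q, hq⟩
  obtain ⟨p, hp⟩ := hc
  exact w_add_ne h hs q p (by omega)

theorem exists_gap_of_not_memW0Add {x : ℕ} (hx : ¬MemW0Add a b δ 0 x) :
    ∃ n j, x = w a b δ n + j ∧ 0 < j ∧ x < w a b δ (n + 1) := by
  have hex : ∃ m, x < w a b δ m := ⟨x + 1, Nat.lt_of_succ_le (le_w _)⟩
  obtain ⟨n, hn⟩ : ∃ n, Nat.find hex = n + 1 := Nat.exists_eq_succ_of_ne_zero fun h0 => by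
    have h := Nat.find_spec hex
    rw [h0] at h
    simp [w] at h
  have hle : w a b δ n ≤ x := not_lt.1 (Nat.find_min hex (by omega))
  refine ⟨n, x - w a b δ n, by omega, ?_, hn ▸ Nat.find_spec hex⟩
  by_contra hj
  exact hx ⟨n, by omega⟩

/-- For `x ∈ W3`, this makes the options `x - b` and `x - (a + b)` take the values `0` and `1`. -/
def Class3Witnesses (a b δ x : ℕ) : Prop :=
  MemW0Add a b δ (a + b) x ∨ MemW0Add a b δ b x ∧ MemW0Add a b δ (2 * a + b) x

/-- For `x` outside `W0`, `W0 + a` and `W3`, this gives options of values `0` and `1` and rules out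
an option of value `2`. -/
def Class2Witnesses (a b δ x : ℕ) : Prop :=
  (MemW0Add a b δ b x ∨ MemW0Add a b δ (a + b) x) ∧
  (MemW0Add a b δ (2 * a) x ∨ MemW0Add a b δ a (x + δ)) ∧
  (MemW0Add a b δ (2 * a) x ∨ MemW0Add a b δ (a + b) x ∨ MemW0Add a b δ (2 * a + b) x)

def LocalShape (a b δ x : ℕ) : Prop :=
  MemW0Add a b δ a x ∨
    MemW0Add a b δ 0 (x + δ) ∧ Class3Witnesses a b δ x ∨
    ¬MemW0Add a b δ 0 (x + δ) ∧ Class2Witnesses a b δ x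

theorem localShape_gapA (h : Admissible a b δ) {n j : ℕ} (hna : n % a = a - 1)
    (hnδ : n % δ + 1 < δ) (hj : 0 < j) (hja : j ≤ a) : LocalShape a b δ (w a b δ n + j) := by
  obtain ⟨hlt, hlt2, hb⟩ := h
  have := Nat.mod_le n a
  rcases le_or_gt a (j + n % δ) with h1 | h1
  · obtain ⟨P, D, Q, hw⟩ := w_increment (b := b) hlt hlt2 (Nat.sub_le n (a - j)) (by omega)
    exact Or.inl ⟨n - (a - j), by omega⟩
  have hab : MemW0Add a b δ (a + b) (w a b δ n + j) := by
    obtain ⟨P, D, Q, hw⟩ := w_increment (b := b) hlt hlt2 (Nat.sub_le n (a - j)) (by omega)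
    exact ⟨n - (a - j), by omega⟩
  right
  rcases le_or_gt j (2 * a - δ) with h2 | h2
  · left
    refine ⟨?_, Or.inl hab⟩
    obtain ⟨P, D, Q, hw⟩ :=
      w_increment (b := b) hlt hlt2 (Nat.le_add_right n (j + δ - a)) (by omega)
    exact ⟨n + (j + δ - a), by omega⟩
  · right
    refine ⟨?_, Or.inr hab, Or.inr ?_, Or.inr (Or.inl hab)⟩
    · rintro ⟨p, hp⟩
      obtain ⟨hnp, hpn⟩ := le_add_of_w_add_eq (show w a b δ n + (j + δ) = w a b δ p by omega)
      obtain ⟨P, D, Q, hw⟩ := w_increment (b := b) hlt hlt2 hnp (by omega)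
      omega
    · obtain ⟨P, D, Q, hw⟩ :=
        w_increment (b := b) hlt hlt2 (Nat.le_add_right n (j + δ - 2 * a)) (by omega)
      exact ⟨n + (j + δ - 2 * a), by omega⟩

theorem localShape_gapC_low (h : Admissible a b δ) {n j : ℕ} (hna : n % a = a - 1)
    (hnδ : n % δ = δ - 1) (hj : 0 < j) (hja : j ≤ 2 * a) : LocalShape a b δ (w a b δ n + j) := by
  obtain ⟨hlt, hlt2, hb⟩ := h
  have := Nat.mod_le n a
  have := Nat.mod_le n δ
  rcases le_or_gt j a with h1 | h1
  · obtain ⟨P, D, Q, hw⟩ := w_increment (b := b) hlt hlt2 (Nat.sub_le n (a - j)) (by omega)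
    exact Or.inl ⟨n - (a - j), by omega⟩
  · right; right
    have h2a : MemW0Add a b δ (2 * a) (w a b δ n + j) := by
      obtain ⟨P, D, Q, hw⟩ := w_increment (b := b) hlt hlt2 (Nat.sub_le n (2 * a - j)) (by omega)
      exact ⟨n - (2 * a - j), by omega⟩
    refine ⟨?_, ?_, Or.inl h2a, Or.inl h2a⟩
    · rintro ⟨p, hp⟩
      obtain ⟨hnp, hpn⟩ := le_add_of_w_add_eq (show w a b δ n + (j + δ) = w a b δ p by omega)
      obtain ⟨P, D, Q, hw⟩ := w_increment (b := b) hlt hlt2 hnp (by omega)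
      omega
    · obtain ⟨P, D, Q, hw⟩ :=
        w_increment (b := b) hlt hlt2 (Nat.sub_le n (a + δ - j)) (by omega)
      exact memW0Add_or_memW0Add (p := n - (a + δ - j)) (by omega)

theorem localShape_gapC_high (h : Admissible a b δ) {n j : ℕ} (hna : n % a = a - 1)
    (hnδ : n % δ = δ - 1) (hj : 2 * a < j) (hja : j ≤ 2 * a + δ) :
    LocalShape a b δ (w a b δ n + j) := by
  obtain ⟨hlt, hlt2, hb⟩ := h
  have := Nat.mod_le n a
  have := Nat.mod_le n δ
  right
  rcases le_or_gt j (3 * a) with h3 | h3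
  · left
    constructor
    · obtain ⟨P, D, Q, hw⟩ :=
        w_increment (b := b) hlt hlt2 (Nat.le_add_right n (j - 2 * a)) (by omega)
      exact ⟨n + (j - 2 * a), by omega⟩
    rcases le_or_gt j (a + δ) with h4 | h4
    · refine Or.inr ⟨?_, ?_⟩
      · obtain ⟨P, D, Q, hw⟩ :=
          w_increment (b := b) hlt hlt2 (Nat.sub_le n (a + δ - j)) (by omega)
        exact ⟨n - (a + δ - j), by omega⟩
      · obtain ⟨P, D, Q, hw⟩ :=
          w_increment (b := b) hlt hlt2 (Nat.sub_le n (2 * a + δ - j)) (by omega)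
        exact ⟨n - (2 * a + δ - j), by omega⟩
    · obtain ⟨P, D, Q, hw⟩ :=
        w_increment (b := b) hlt hlt2 (Nat.sub_le n (2 * a + δ - j)) (by omega)
      exact Or.inl ⟨n - (2 * a + δ - j), by omega⟩
  · right
    have hab : MemW0Add a b δ (a + b) (w a b δ n + j) := by
      obtain ⟨P, D, Q, hw⟩ :=
        w_increment (b := b) hlt hlt2 (Nat.sub_le n (2 * a + δ - j)) (by omega)
      exact ⟨n - (2 * a + δ - j), by omega⟩
    refine ⟨?_, Or.inr hab, Or.inr ?_, Or.inr (Or.inl hab)⟩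
    · rintro ⟨p, hp⟩
      obtain ⟨hnp, hpn⟩ := le_add_of_w_add_eq (show w a b δ n + (j + δ) = w a b δ p by omega)
      obtain ⟨P, D, Q, hw⟩ := w_increment (b := b) hlt hlt2 hnp (by omega)
      omega
    · obtain ⟨P, D, Q, hw⟩ :=
        w_increment (b := b) hlt hlt2 (Nat.le_add_right n (j - 3 * a)) (by omega)
      exact ⟨n + (j - 3 * a), by omega⟩

theorem localShape_gapB_low (h : Admissible a b δ) {n j : ℕ} (hna : n % a + 1 < a)
    (hnδ : n % δ = δ - 1) (hj : 0 < j) (hja : j ≤ a) : LocalShape a b δ (w a b δ n + j) := by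
  obtain ⟨hlt, hlt2, hb⟩ := h
  have := Nat.mod_le n δ
  rcases le_or_gt a (j + n % a) with h1 | h1
  · obtain ⟨P, D, Q, hw⟩ := w_increment (b := b) hlt hlt2 (Nat.sub_le n (a - j)) (by omega)
    exact Or.inl ⟨n - (a - j), by omega⟩
  have h2a : MemW0Add a b δ (2 * a) (w a b δ n + j) := by
    obtain ⟨P, D, Q, hw⟩ := w_increment (b := b) hlt hlt2 (Nat.sub_le n (a - j)) (by omega)
    exact ⟨n - (a - j), by omega⟩
  right; right
  refine ⟨?_, ?_, Or.inl h2a, Or.inl h2a⟩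
  · rintro ⟨p, hp⟩
    obtain ⟨hnp, hpn⟩ := le_add_of_w_add_eq (show w a b δ n + (j + δ) = w a b δ p by omega)
    obtain ⟨P, D, Q, hw⟩ := w_increment (b := b) hlt hlt2 hnp (by omega)
    omega
  · obtain ⟨P, D, Q, hw⟩ := w_increment (b := b) hlt hlt2 (Nat.sub_le n (δ - j)) (by omega)
    exact memW0Add_or_memW0Add (p := n - (δ - j)) (by omega)

theorem localShape_gapB_mid (h : Admissible a b δ) {n j : ℕ} (hna : n % a + 1 < a)
    (hnδ : n % δ = δ - 1) (haj : a < j) (hj : j + n % a + 1 ≤ 2 * a) :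
    LocalShape a b δ (w a b δ n + j) := by
  obtain ⟨hlt, hlt2, hb⟩ := h
  have := Nat.mod_le n δ
  right; left
  constructor
  · obtain ⟨P, D, Q, hw⟩ :=
      w_increment (b := b) hlt hlt2 (Nat.le_add_right n (j - a)) (by omega)
    exact ⟨n + (j - a), by omega⟩
  rcases le_or_gt (j + a + n % a + 1) δ with h4 | h4
  · obtain ⟨P, D, Q, hw⟩ := w_increment (b := b) hlt hlt2 (Nat.sub_le n (δ - j)) (by omega)
    exact Or.inl ⟨n - (δ - j), by omega⟩
  rcases le_or_gt (j + n % a + 1) δ with h5 | h5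
  · refine Or.inr ⟨?_, ?_⟩
    · obtain ⟨P, D, Q, hw⟩ := w_increment (b := b) hlt hlt2 (Nat.sub_le n (δ - j)) (by omega)
      exact ⟨n - (δ - j), by omega⟩
    · obtain ⟨P, D, Q, hw⟩ :=
        w_increment (b := b) hlt hlt2 (Nat.sub_le n (a + δ - j)) (by omega)
      exact ⟨n - (a + δ - j), by omega⟩
  · obtain ⟨P, D, Q, hw⟩ := w_increment (b := b) hlt hlt2 (Nat.sub_le n (a + δ - j)) (by omega)
    exact Or.inl ⟨n - (a + δ - j), by omega⟩

theorem localShape_gapB_high (h : Admissible a b δ) {n j : ℕ} (hna : n % a + 1 < a)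
    (hnδ : n % δ = δ - 1) (hj : 2 * a < j + n % a + 1) (hjb : j ≤ a + δ) :
    LocalShape a b δ (w a b δ n + j) := by
  obtain ⟨hlt, hlt2, hb⟩ := h
  have := Nat.mod_le n δ
  right
  have hb_or_ab : MemW0Add a b δ b (w a b δ n + j) ∨ MemW0Add a b δ (a + b) (w a b δ n + j) := by
    obtain ⟨P, D, Q, hw⟩ := w_increment (b := b) hlt hlt2 (Nat.sub_le n (a + δ - j)) (by omega)
    exact memW0Add_or_memW0Add (p := n - (a + δ - j)) (by omega)
  rcases le_or_gt (j + n % a + 1) (3 * a) with h4 | h4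
  · right
    have h2a : j ≤ 2 * a → MemW0Add a b δ (2 * a) (w a b δ n + j) := fun h2a => by
      obtain ⟨P, D, Q, hw⟩ :=
        w_increment (b := b) hlt hlt2 (Nat.sub_le n (2 * a - j)) (by omega)
      exact ⟨n - (2 * a - j), by omega⟩
    refine ⟨?_, hb_or_ab, ?_, ?_⟩
    · rintro ⟨p, hp⟩
      obtain ⟨hnp, hpn⟩ := le_add_of_w_add_eq (show w a b δ n + (j + δ) = w a b δ p by omega)
      obtain ⟨P, D, Q, hw⟩ := w_increment (b := b) hlt hlt2 hnp (by omega)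
      omega
    · rcases le_or_gt j (2 * a) with h5 | h5
      · exact Or.inl (h2a h5)
      obtain ⟨P, D, Q, hw⟩ :=
        w_increment (b := b) hlt hlt2 (Nat.le_add_right n (j - 2 * a)) (by omega)
      exact Or.inr ⟨n + (j - 2 * a), by omega⟩
    · rcases le_or_gt j (2 * a) with h5 | h5
      · exact Or.inl (h2a h5)
      rcases le_or_gt (j + n % a + 1) (a + δ) with h6 | h6
      · obtain ⟨P, D, Q, hw⟩ :=
          w_increment (b := b) hlt hlt2 (Nat.sub_le n (a + δ - j)) (by omega)
        exact Or.inr (Or.inl ⟨n - (a + δ - j), by omega⟩)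
      · obtain ⟨P, D, Q, hw⟩ :=
          w_increment (b := b) hlt hlt2 (Nat.sub_le n (2 * a + δ - j)) (by omega)
        exact Or.inr (Or.inr ⟨n - (2 * a + δ - j), by omega⟩)
  · left
    constructor
    · obtain ⟨P, D, Q, hw⟩ :=
        w_increment (b := b) hlt hlt2 (Nat.le_add_right n (j - 2 * a)) (by omega)
      exact ⟨n + (j - 2 * a), by omega⟩
    rcases hb_or_ab with hb' | hab
    · obtain ⟨P, D, Q, hw⟩ :=
        w_increment (b := b) hlt hlt2 (Nat.sub_le n (2 * a + δ - j)) (by omega)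
      exact Or.inr ⟨hb', n - (2 * a + δ - j), by omega⟩
    · exact Or.inl hab

theorem localShape_of_not_memW0Add (h : Admissible a b δ) {x : ℕ}
    (hx : ¬MemW0Add a b δ 0 x) : LocalShape a b δ x := by
  obtain ⟨n, j, rfl, hj, hgap⟩ := exists_gap_of_not_memW0Add hx
  -- the gap after `w n` has length `a`, `b` or `a + b` according as `a`, `δ` or both divide `n + 1`
  have ⟨hlt, hlt2, hb⟩ := h
  obtain ⟨P, D, Q, hw⟩ := w_increment (b := b) hlt hlt2 (Nat.le_add_right n 1) (by omega)
  by_cases hna : n % a = a - 1 <;> by_cases hnδ : n % δ = δ - 1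
  · rcases le_or_gt j (2 * a) with hj2 | hj2
    · exact localShape_gapC_low h hna hnδ hj hj2
    · exact localShape_gapC_high h hna hnδ hj2 (by omega)
  · exact localShape_gapA h hna (by omega) hj (by omega)
  · rcases le_or_gt j a with hja | haj
    · exact localShape_gapB_low h (by omega) hnδ hj hja
    rcases le_or_gt (j + n % a + 1) (2 * a) with hj2 | hj2
    · exact localShape_gapB_mid h (by omega) hnδ haj hj2
    · exact localShape_gapB_high h (by omega) hnδ hj2 (by omega)
  · omega

def options (a b : ℕ) (f : ℕ → ℕ) (x : ℕ) : Set ℕ :=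
  {v | ∃ s ∈ ({a, b, a + b} : Set ℕ), s ≤ x ∧ v = f (x - s)}

theorem mex_eq_of_forall_lt_mem {T : Set ℕ} {k : ℕ} (hk : k ∉ T) (h : ∀ i < k, i ∈ T) :
    mex T = k :=
  le_antisymm (Nat.sInf_le hk) (le_csInf ⟨k, hk⟩ fun _ hm => not_lt.1 fun hmk => hm (h _ hmk))

open Classical in
noncomputable def grundyClass (a b δ x : ℕ) : ℕ :=
  if MemW0Add a b δ 0 x then 0
  else if MemW0Add a b δ a x then 1
  else if MemW0Add a b δ 0 (x + δ) then 3
  else 2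

section Options

variable {s x : ℕ}

open Classical in
theorem grundyClass_sub (hs : s ≤ x) :
    grundyClass a b δ (x - s) =
      if MemW0Add a b δ s x then 0
      else if MemW0Add a b δ (a + s) x then 1
      else if MemW0Add a b δ s (x + δ) then 3
      else 2 := by
  simp only [grundyClass, memW0Add_congr (d := s) (y := x) (show 0 + x = s + (x - s) by omega),
    memW0Add_congr (d := a + s) (y := x) (show a + x = a + s + (x - s) by omega),
    memW0Add_congr (d := s) (y := x + δ) (show 0 + (x + δ) = s + (x - s + δ) by omega)]

theorem grundyClass_sub_eq_zero_iff (hs : s ≤ x) :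
    grundyClass a b δ (x - s) = 0 ↔ MemW0Add a b δ s x := by
  rw [grundyClass_sub hs]
  split_ifs <;> simp_all

theorem memW0Add_of_grundyClass_sub_eq_one (hs : s ≤ x) (h : grundyClass a b δ (x - s) = 1) :
    MemW0Add a b δ (a + s) x := by
  rw [grundyClass_sub hs] at h
  split_ifs at h <;> simp_all

theorem memW0Add_of_grundyClass_sub_eq_three (hs : s ≤ x) (h : grundyClass a b δ (x - s) = 3) :
    MemW0Add a b δ s (x + δ) := by
  rw [grundyClass_sub hs] at h
  split_ifs at h <;> simp_all

theorem grundyClass_sub_eq_one (h : Admissible a b δ) (h1 : MemW0Add a b δ (a + s) x) :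
    grundyClass a b δ (x - s) = 1 := by
  have h0 : ¬MemW0Add a b δ s x := fun h0 =>
    not_memW0Add_add h (s := a) (by simp) h0 (by rwa [add_comm])
  rw [grundyClass_sub (by have := le_of_memW0Add h1; omega), if_neg h0, if_pos h1]

theorem grundyClass_sub_eq_two_iff (hs : s ≤ x) :
    grundyClass a b δ (x - s) = 2 ↔
      ¬MemW0Add a b δ s x ∧ ¬MemW0Add a b δ (a + s) x ∧ ¬MemW0Add a b δ s (x + δ) := by
  rw [grundyClass_sub hs]
  split_ifs <;> simp_all

end Options

theorem mex_options_eq_zero (h : Admissible a b δ) {x : ℕ}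
    (hx : MemW0Add a b δ 0 x) : mex (options a b (grundyClass a b δ) x) = 0 :=
  mex_eq_of_forall_lt_mem (fun ⟨_, hs, hsx, hv⟩ => not_memW0Add_add h hs hx <| by
    rw [zero_add]; exact (grundyClass_sub_eq_zero_iff hsx).1 hv.symm) (by simp)

theorem mex_options_eq_one (h : Admissible a b δ) {x : ℕ}
    (hx : MemW0Add a b δ a x) : mex (options a b (grundyClass a b δ) x) = 1 := by
  refine mex_eq_of_forall_lt_mem ?_ fun i hi => ?_
  · rintro ⟨s, hs, hsx, hv⟩
    exact not_memW0Add_add h hs hx (memW0Add_of_grundyClass_sub_eq_one hsx hv.symm)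
  · obtain rfl : i = 0 := by omega
    have hax := le_of_memW0Add hx
    exact ⟨a, by simp, hax, ((grundyClass_sub_eq_zero_iff hax).2 hx).symm⟩

theorem mex_options_eq_three (h : Admissible a b δ) {x : ℕ} (h1 : ¬MemW0Add a b δ a x)
    (h3 : MemW0Add a b δ 0 (x + δ)) (hw : Class3Witnesses a b δ x) :
    mex (options a b (grundyClass a b δ) x) = 3 := by
  have hb := h.eq_add
  have hx : a + b ≤ x := by
    rcases hw with hw | ⟨-, hw⟩ <;> (have := le_of_memW0Add hw; omega)
  refine mex_eq_of_forall_lt_mem ?_ fun i hi => ?_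
  · rintro ⟨s, hs, hsx, hv⟩
    exact not_memW0Add_add h hs h3 <| by
      rw [zero_add]; exact memW0Add_of_grundyClass_sub_eq_three hsx hv.symm
  interval_cases i
  · rcases hw with hab | ⟨hb', -⟩
    · exact ⟨a + b, by simp, hx, ((grundyClass_sub_eq_zero_iff hx).2 hab).symm⟩
    · exact ⟨b, by simp, by omega, ((grundyClass_sub_eq_zero_iff (by omega)).2 hb').symm⟩
  · rcases hw with hab | ⟨-, h2ab⟩
    · exact ⟨b, by simp, by omega, (grundyClass_sub_eq_one h hab).symm⟩
    · exact ⟨a + b, by simp, hx,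
        (grundyClass_sub_eq_one h ((memW0Add_congr (by omega)).1 h2ab)).symm⟩
  · refine ⟨a, by simp, by omega, ((grundyClass_sub_eq_two_iff (by omega)).2 ⟨h1, ?_, ?_⟩).symm⟩
    · exact fun h2a => not_memW0Add_add h (s := a + b) (by simp) h3
        ((memW0Add_congr (by omega)).1 h2a)
    · exact fun ha => not_memW0Add_add h (s := a) (by simp) h3 (by rwa [zero_add])

theorem mex_options_eq_two (h : Admissible a b δ) {x : ℕ} (h0 : ¬MemW0Add a b δ 0 x)
    (h1 : ¬MemW0Add a b δ a x) (h3 : ¬MemW0Add a b δ 0 (x + δ))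
    (hw : Class2Witnesses a b δ x) : mex (options a b (grundyClass a b δ) x) = 2 := by
  have hb := h.eq_add
  obtain ⟨hw0, hwa, hw1⟩ := hw
  have hx : b ≤ x := by
    rcases hw0 with hw0 | hw0 <;> (have := le_of_memW0Add hw0; omega)
  refine mex_eq_of_forall_lt_mem ?_ fun i hi => ?_
  · rintro ⟨s, hs, hsx, hv⟩
    refine ((grundyClass_sub_eq_two_iff hsx).1 hv.symm).elim fun hs0 hs' => ?_
    simp only [Set.mem_insert_iff, Set.mem_singleton_iff] at hs
    rcases hs with rfl | rfl | rfl
    · rcases hwa with h2a | ha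
      · exact hs'.1 ((memW0Add_congr (by omega)).1 h2a)
      · exact hs'.2 ha
    · rcases hw0 with hb' | hab
      · exact hs0 hb'
      · exact hs'.1 hab
    · rcases hw1 with h2a | hab | h2ab
      · exact hs'.2 ((memW0Add_congr (by omega)).1 h2a)
      · exact hs0 hab
      · exact hs'.1 ((memW0Add_congr (by omega)).1 h2ab)
  interval_cases i
  · rcases hw0 with hb' | hab
    · exact ⟨b, by simp, hx, ((grundyClass_sub_eq_zero_iff hx).2 hb').symm⟩
    · have := le_of_memW0Add hab
      exact ⟨a + b, by simp, this, ((grundyClass_sub_eq_zero_iff this).2 hab).symm⟩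
  · rcases hw1 with h2a | hab | h2ab
    · exact ⟨a, by simp, by omega,
        (grundyClass_sub_eq_one h ((memW0Add_congr (by omega)).1 h2a)).symm⟩
    · exact ⟨b, by simp, hx, (grundyClass_sub_eq_one h hab).symm⟩
    · exact ⟨a + b, by simp, by have := le_of_memW0Add h2ab; omega,
        (grundyClass_sub_eq_one h ((memW0Add_congr (by omega)).1 h2ab)).symm⟩

theorem mex_options_grundyClass (h : Admissible a b δ) (x : ℕ) :
    mex (options a b (grundyClass a b δ) x) = grundyClass a b δ x := by
  by_cases h0 : MemW0Add a b δ 0 x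
  · rw [grundyClass, if_pos h0, mex_options_eq_zero h h0]
  by_cases h1 : MemW0Add a b δ a x
  · rw [grundyClass, if_neg h0, if_pos h1, mex_options_eq_one h h1]
  rcases (localShape_of_not_memW0Add h h0).resolve_left h1 with ⟨h3, hw⟩ | ⟨h3, hw⟩
  · rw [grundyClass, if_neg h0, if_neg h1, if_pos h3, mex_options_eq_three h h1 h3 hw]
  · rw [grundyClass, if_neg h0, if_neg h1, if_neg h3, mex_options_eq_two h h0 h1 h3 hw]

theorem grundy_eq_grundyClass (h : Admissible a b δ) (G : ℕ → ℕ)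
    (hG : ∀ x, G x = mex (options a b G x)) (x : ℕ) : G x = grundyClass a b δ x := by
  induction x using Nat.strong_induction_on with
  | _ x ih =>
    rw [hG, ← mex_options_grundyClass h x]
    congr 1
    ext v
    refine exists_congr fun s => and_congr_right fun hs => and_congr_right fun hsx => ?_
    have : 0 < s := by
      have ⟨hlt, hlt2, _⟩ := h
      simp only [Set.mem_insert_iff, Set.mem_singleton_iff] at hs
      omega
    rw [ih (x - s) (by omega)]

theorem grundyClass_of_mem_W3 (h : Admissible a b δ) {x : ℕ} (hx : x ∈ W3 a b δ) :
    grundyClass a b δ x = 3 := by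
  have hb := h.eq_add
  obtain ⟨h3, h0⟩ := hx
  rw [← memW0Add_zero_iff] at h3 h0
  have h1 : ¬MemW0Add a b δ a x := fun h1 =>
    not_memW0Add_add h (s := b) (by simp) h3 ((memW0Add_congr (by omega)).1 h1)
  rw [grundyClass, if_neg h0, if_neg h1, if_pos h3]

end SubtractionGame

theorem stmt_18_general (a δ : ℕ) (hlt : a < δ) (hlt2 : δ < 2 * a)
    (b : ℕ) (hb : b = a + δ)
    (G : ℕ → ℕ)
    (hG : ∀ x, G x = mex {v | ∃ s ∈ ({a, b, a + b} : Set ℕ), s ≤ x ∧ v = G (x - s)}) :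
    ∀ x ∈ W3 a b δ, G x = 3 := by
  intro x hx
  have h : SubtractionGame.Admissible a b δ := ⟨hlt, hlt2, hb⟩
  rw [SubtractionGame.grundy_eq_grundyClass h G hG x, SubtractionGame.grundyClass_of_mem_W3 h hx]

/-- If `G` is the Grundy function of the subtraction game with moves
`S = {a, b, a+b}`, then `G x = 3` for every `x ∈ W3`. -/
theorem stmt_18 (a δ : ℕ) (ha : 0 < a) (hlt : a < δ) (hlt2 : δ < 2 * a)
    (hgcd : Nat.gcd a δ = 1) (b : ℕ) (hb : b = a + δ)
    (G : ℕ → ℕ)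
    (hG : ∀ x, G x = mex {v | ∃ s ∈ ({a, b, a + b} : Set ℕ), s ≤ x ∧ v = G (x - s)}) :
    ∀ x ∈ W3 a b δ, G x = 3 :=
  stmt_18_general a δ hlt hlt2 b hb G hG
end
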